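/- arXiv:2306.07357 — 6 statements merged into one kernel-verified Lean document; each statement's English description precedes it below -/
import Mathlib

section
/- Probability that a fixed edge lies on a cycle in a subcritical Erdős–Rényi graph. Let n ≥ 2 and θ ∈ [0,1] with n·θ < 1, and let G be an Erdős–Rényi random graph G(n,θ) on n vertices (each of the C(n,2) possible edges is present independently with probability θ). Then for any fixed edge e of the complete graph K_n, the probability that e belongs to Conn(G), i.e., that e is present in G and lies on a cycle of G, is at most n·θ^3 / (1 − n·θ). -/
open MeasureTheory ProbabilityTheory Filter SimpleGraph

noncomputable section

namespace MSTNoise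

/-- The minimum spanning forest of a graph `G` with edge weights `u`:
the set of edges `e` of `G` such that there is no path between the endpoints of `e`
using only edges of `G` of `u`-weight strictly smaller than `u e`. -/
def MSF {V : Type*} (G : SimpleGraph V) (u : Sym2 V → ℝ) : Set (Sym2 V) :=
  {e | e ∈ G.edgeSet ∧ ∀ x y : V, e = s(x, y) →
      ¬ (SimpleGraph.fromEdgeSet {f | f ∈ G.edgeSet ∧ u f < u e}).Reachable x y}

/-- The set of edges of `G` lying on a cycle of `G`. -/
def ConnE {V : Type*} (G : SimpleGraph V) : Set (Sym2 V) :=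
  {e | ∃ (x : V) (c : G.Walk x x), c.IsCycle ∧ e ∈ c.edges}

/-- The metric space structure on a subset `S` of the vertices of `G` in which all points
are mutually reachable, with distance `c` times the graph distance. -/
def scaledMetric {V : Type*} (G : SimpleGraph V) (S : Set V)
    (hS : ∀ x ∈ S, ∀ y ∈ S, G.Reachable x y) {c : ℝ} (hc : 0 < c) : MetricSpace S where
  dist x y := c * G.dist x.1 y.1
  dist_self x := by simp
  dist_comm x y := by
    show c * (G.dist x.1 y.1 : ℝ) = c * (G.dist y.1 x.1 : ℝ)
    rw [SimpleGraph.dist_comm]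
  dist_triangle x y z := by
    show c * (G.dist x.1 z.1 : ℝ) ≤ c * (G.dist x.1 y.1 : ℝ) + c * (G.dist y.1 z.1 : ℝ)
    have hxy := hS x.1 x.2 y.1 y.2
    have hyz := hS y.1 y.2 z.1 z.2
    obtain ⟨p, hp⟩ := hxy.exists_walk_length_eq_dist
    obtain ⟨q, hq⟩ := hyz.exists_walk_length_eq_dist
    have h := SimpleGraph.dist_le (p.append q)
    rw [SimpleGraph.Walk.length_append, hp, hq] at h
    have h' : (G.dist x.1 z.1 : ℝ) ≤ (G.dist x.1 y.1 : ℝ) + (G.dist y.1 z.1 : ℝ) := by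
      exact_mod_cast h
    nlinarith
  eq_of_dist_eq_zero := by
    intro x y h
    have h : c * (G.dist x.1 y.1 : ℝ) = 0 := h
    have hxy := hS x.1 x.2 y.1 y.2
    have h2 : (G.dist x.1 y.1 : ℝ) = 0 := by
      rcases mul_eq_zero.1 h with h' | h'
      · exact absurd h' hc.ne'
      · exact h'
    have h3 : G.dist x.1 y.1 = 0 := by exact_mod_cast h2
    exact Subtype.ext (hxy.dist_eq_zero_iff.1 h3)

open scoped Classical in
/-- The point of the Gromov–Hausdorff space given by a subset `S` of the vertices of a
graph `G`, with distance `c` times the graph distance; a one-point space in degenerate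
cases. -/
def ghSpaceOfSet {n : ℕ} (G : SimpleGraph (Fin n)) (S : Set (Fin n)) (c : ℝ) :
    GromovHausdorff.GHSpace :=
  if h : S.Nonempty ∧ (∀ x ∈ S, ∀ y ∈ S, G.Reachable x y) ∧ 0 < c then
    letI : Nonempty S := h.1.to_subtype
    letI : MetricSpace S := scaledMetric G S h.2.1 h.2.2
    GromovHausdorff.toGHSpace S
  else GromovHausdorff.toGHSpace PUnit.{1}

end MSTNoise

namespace MSTNoise
open scoped Classical

/-- Sorting key of a connected component: components are ordered by decreasing number of
vertices, ties broken by smallest minimal vertex label. -/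
noncomputable def compKey {n : ℕ} {G : SimpleGraph (Fin n)} (c : G.ConnectedComponent) : ℕ :=
  (n - Nat.card c.supp) * n + sInf {m : ℕ | ∃ v ∈ c.supp, (v : Fin n).val = m}

/-- The list of connected components of `G`, ordered by decreasing number of vertices,
ties broken by smallest minimal vertex label. -/
noncomputable def componentList {n : ℕ} (G : SimpleGraph (Fin n)) :
    List G.ConnectedComponent :=
  (Finset.univ : Finset G.ConnectedComponent).toList.mergeSort
    (fun c d => decide (compKey c ≤ compKey d))

/-- The vertex set of the `j`-th largest connected component of `G` (`j ≥ 1`);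
empty if `G` has fewer than `j` components. -/
noncomputable def CjSupp {n : ℕ} (G : SimpleGraph (Fin n)) (j : ℕ) : Set (Fin n) :=
  if h : j - 1 < (componentList G).length then ((componentList G).get ⟨j - 1, h⟩).supp else ∅

/-- The `j`-th largest connected component of `G`, viewed as a graph on the vertex set of
`G` (`j ≥ 1`); the empty graph if `G` has fewer than `j` components. -/
noncomputable def CjGraph {n : ℕ} (G : SimpleGraph (Fin n)) (j : ℕ) : SimpleGraph (Fin n) :=
  SimpleGraph.fromEdgeSet {e | e ∈ G.edgeSet ∧ ∀ v ∈ e, v ∈ CjSupp G j}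

/-- `S j`: the scaled metric space of the `j`-th largest component, as a point of the
Gromov–Hausdorff space (a one-point space if `G` has fewer than `j` components). -/
noncomputable def Sj {n : ℕ} (G : SimpleGraph (Fin n)) (j : ℕ) (c : ℝ) :
    GromovHausdorff.GHSpace :=
  ghSpaceOfSet G (CjSupp G j) c

end MSTNoise

namespace MSTNoise

/-- The uniform distribution on `[0,1]`. -/
noncomputable def uniform01 : Measure ℝ := volume.restrict (Set.Icc (0 : ℝ) 1)

/-- The Bernoulli distribution on `ℝ`: value `1` with probability `e`, value `0` with
probability `1 - e`. -/
noncomputable def bernoulliReal (e : ℝ) : Measure ℝ :=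
  ENNReal.ofReal (1 - e) • Measure.dirac 0 + ENNReal.ofReal e • Measure.dirac 1

/-- The noised weight: the original weight if the Bernoulli mark is `0`, the fresh weight
otherwise. -/
def noised {Ωn : Type*} (w w' b : Ωn → ℝ) (ω : Ωn) : ℝ := if b ω = 0 then w ω else w' ω

/-- `p(n, λ) = 1/n + λ n^{-4/3}`. -/
noncomputable def pnl (n : ℕ) (lam : ℝ) : ℝ := 1 / n + lam * (n : ℝ) ^ (-(4 : ℝ) / 3)

/-- The graph whose edges are those with weight at most `p`. -/
def wGraph {n : ℕ} {Ωn : Type*} (W : Sym2 (Fin n) → Ωn → ℝ) (p : ℝ) (ω : Ωn) :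
    SimpleGraph (Fin n) :=
  SimpleGraph.fromEdgeSet {e | W e ω ≤ p}

/-- The minimum spanning tree of the complete graph on `Fin n` with weights `u`,
as a graph. -/
def MSTGraph {n : ℕ} (u : Sym2 (Fin n) → ℝ) : SimpleGraph (Fin n) :=
  SimpleGraph.fromEdgeSet (MSF (⊤ : SimpleGraph (Fin n)) u)

/-- The rescaled minimum spanning tree, as a point of the Gromov–Hausdorff space:
the vertex set `Fin n` with distance `n^{-1/3}` times the graph distance in the MST. -/
noncomputable def scaledMST {n : ℕ} (u : Sym2 (Fin n) → ℝ) : GromovHausdorff.GHSpace :=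
  ghSpaceOfSet (MSTGraph u) Set.univ ((n : ℝ) ^ (-(1 : ℝ) / 3))

end MSTNoise

namespace MSTNoise

/-- The minimum spanning forest of `G` with weights `u`, viewed as a graph. -/
def MSFGraph {n : ℕ} (G : SimpleGraph (Fin n)) (u : Sym2 (Fin n) → ℝ) :
    SimpleGraph (Fin n) :=
  SimpleGraph.fromEdgeSet (MSF G u)

end MSTNoise

namespace MSTNoise

/-- Edges of a chain `x, l..., y`. -/
def chainEdges {V : Type*} : V → List V → V → List (Sym2 V)
  | x, [], y => [s(x, y)]
  | x, v :: l, y => s(x, v) :: chainEdges v l y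

lemma chainEdges_length {V : Type*} (x y : V) (l : List V) :
    (chainEdges x l y).length = l.length + 1 := by
  induction l generalizing x with
  | nil => rfl
  | cons v l ih => simp [chainEdges, ih]

lemma mem_of_mem_chainEdges {V : Type*} {x y u : V} {l : List V} {e : Sym2 V}
    (he : e ∈ chainEdges x l y) (hu : u ∈ e) : u ∈ x :: (l ++ [y]) := by
  induction l generalizing x with
  | nil =>
    simp only [chainEdges, List.mem_singleton] at he
    subst he
    rcases Sym2.mem_iff.1 hu with h | h <;> simp [h]
  | cons v l ih =>
    simp only [chainEdges, List.mem_cons] at he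
    rcases he with h | h
    · subst h
      rcases Sym2.mem_iff.1 hu with h | h <;> simp [h]
    · have := ih h
      simp only [List.mem_cons, List.mem_append, List.mem_singleton] at this ⊢
      tauto

lemma not_isDiag_of_mem_chainEdges {V : Type*} {x y : V} {l : List V}
    (hnd : (x :: (l ++ [y])).Nodup) : ∀ e ∈ chainEdges x l y, ¬e.IsDiag := by
  induction l generalizing x with
  | nil =>
    intro e he
    simp only [chainEdges, List.mem_singleton] at he
    subst he
    have : x ≠ y := by simp at hnd; tauto
    simpa [Sym2.mk_isDiag_iff] using this
  | cons v l ih =>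
    intro e he
    simp only [chainEdges, List.mem_cons] at he
    rcases he with h | h
    · subst h
      have : x ≠ v := by simp at hnd; tauto
      simpa [Sym2.mk_isDiag_iff] using this
    · exact ih (by simp at hnd ⊢; tauto) e h

lemma chainEdges_nodup {V : Type*} {x y : V} {l : List V}
    (hnd : (x :: (l ++ [y])).Nodup) : (chainEdges x l y).Nodup := by
  induction l generalizing x with
  | nil => simp [chainEdges]
  | cons v l ih =>
    have h1 : (v :: (l ++ [y])).Nodup := by simp at hnd ⊢; tauto
    have hx : x ∉ v :: (l ++ [y]) := by simp at hnd ⊢; tauto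
    refine List.nodup_cons.2 ⟨fun hmem => ?_, ih h1⟩
    exact hx (mem_of_mem_chainEdges hmem (by simp))

lemma base_not_mem_chainEdges {V : Type*} {x y v : V} {l : List V}
    (hnd : (x :: ((v :: l) ++ [y])).Nodup) : s(x, y) ∉ chainEdges x (v :: l) y := by
  intro h
  simp only [chainEdges, List.mem_cons] at h
  have hvy : v ≠ y := by simp at hnd; tauto
  have hx : x ∉ (v :: l) ++ [y] := by simp at hnd ⊢; tauto
  rcases h with h | h
  · rw [Sym2.eq_iff] at h
    rcases h with ⟨_, h⟩ | ⟨h1, h2⟩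
    · exact hvy h.symm
    · apply hx; simp [← h1]
  · have := mem_of_mem_chainEdges h (Sym2.mem_mk_left x y)
    exact hx (by simpa using this)

lemma exists_chain_of_path {V : Type*} {G : SimpleGraph V} :
    ∀ {x y : V} (p : G.Walk x y), p.IsPath → x ≠ y →
      ∃ l : List V, p.support = x :: (l ++ [y]) ∧ p.edges = chainEdges x l y := by
  intro x y p
  induction p with
  | nil => intro _ h; exact absurd rfl h
  | @cons x v y h q ih =>
    intro hp hxy
    by_cases hvy : v = y
    · subst hvy
      have hq : q = SimpleGraph.Walk.nil := (SimpleGraph.Walk.isPath_iff_eq_nil).1 hp.of_cons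
      subst hq
      exact ⟨[], by simp, by simp [chainEdges]⟩
    · obtain ⟨l, hs, he⟩ := ih hp.of_cons hvy
      exact ⟨v :: l, by simp [hs], by simp [chainEdges, he]⟩

lemma geom_sum_Icc_le {r : ℝ} (h0 : 0 ≤ r) (h1 : r < 1) (n : ℕ) :
    ∑ k ∈ Finset.Icc 1 n, r ^ k ≤ r / (1 - r) := by
  have hr1 : r ≠ 1 := ne_of_lt h1
  have hpos : 0 < 1 - r := by linarith
  have key : ∑ k ∈ Finset.Icc 1 n, r ^ k = r * ∑ k ∈ Finset.range n, r ^ k := by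
    rw [← Finset.Ico_add_one_right_eq_Icc, Finset.sum_Ico_eq_sum_range, Finset.mul_sum]
    simp [pow_succ, pow_add, mul_comm]
  have hgeom : ∑ k ∈ Finset.range n, r ^ k = (r ^ n - 1) / (r - 1) := geom_sum_eq hr1 n
  have heq : (r ^ n - 1) / (r - 1) = (1 - r ^ n) / (1 - r) := by
    rw [← neg_div_neg_eq]; ring_nf
  have h2 : ∑ k ∈ Finset.range n, r ^ k ≤ 1 / (1 - r) := by
    rw [hgeom, heq, div_le_div_iff_of_pos_right hpos]
    have := pow_nonneg h0 n
    linarith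
  calc ∑ k ∈ Finset.Icc 1 n, r ^ k = r * ∑ k ∈ Finset.range n, r ^ k := key
    _ ≤ r * (1 / (1 - r)) := by
        apply mul_le_mul_of_nonneg_left h2 h0
    _ = r / (1 - r) := by ring

/-- **Probability that a fixed edge lies on a cycle in a subcritical Erdős–Rényi graph.**
If each possible edge of `K_n` is present independently with probability `θ` and
`n θ < 1`, then a fixed edge lies on a cycle with probability at most
`n θ³ / (1 − n θ)`. -/
theorem edge_on_cycle_prob_le
    (n : ℕ) (hn : 2 ≤ n) (θ : ℝ) (hθ : θ ∈ Set.Icc (0 : ℝ) 1)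
    (hsub : (n : ℝ) * θ < 1)
    (Ω : Type) (mΩ : MeasureSpace Ω) (hprob : IsProbabilityMeasure (ℙ : Measure Ω))
    (A : Sym2 (Fin n) → Set Ω)
    (hmeas : ∀ e, MeasurableSet (A e))
    (hindep : iIndepSet (fun e : {e : Sym2 (Fin n) // ¬e.IsDiag} => A e.1) ℙ)
    (hAθ : ∀ e : Sym2 (Fin n), ¬e.IsDiag → (ℙ (A e)).toReal = θ)
    (e₀ : Sym2 (Fin n)) (he₀ : ¬e₀.IsDiag) :
    (ℙ {ω | e₀ ∈ ConnE (SimpleGraph.fromEdgeSet {e | ω ∈ A e})}).toReal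
      ≤ (n : ℝ) * θ ^ 3 / (1 - (n : ℝ) * θ) := by
  classical
  induction e₀ using Sym2.ind with
  | _ x y =>
  have hxy : x ≠ y := by simpa [Sym2.mk_isDiag_iff] using he₀
  obtain ⟨hθ0, hθ1⟩ := hθ
  have hn0 : (0:ℝ) ≤ n := Nat.cast_nonneg n
  have hr0 : 0 ≤ (n : ℝ) * θ := mul_nonneg hn0 hθ0
  have hden : 0 < 1 - (n : ℝ) * θ := by linarith
  -- index sets
  set T : ℕ → Finset (List (Fin n)) := fun k =>
    (Finset.univ.image (fun g : Fin k → Fin n => List.ofFn g)).filter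
      (fun L => (x :: (L ++ [y])).Nodup) with hT
  set B : List (Fin n) → Set Ω := fun L =>
    ⋂ e ∈ (s(x, y) :: chainEdges x L y).toFinset, A e with hB
  -- Step 1: inclusion
  have hincl : {ω | s(x, y) ∈ ConnE (SimpleGraph.fromEdgeSet {e | ω ∈ A e})}
      ⊆ ⋃ k ∈ Finset.Icc 1 n, ⋃ L ∈ T k, B L := by
    intro ω hω
    set G := SimpleGraph.fromEdgeSet {e | ω ∈ A e} with hG
    obtain ⟨hadj, hreach⟩ := (G.adj_and_reachable_delete_edges_iff_exists_cycle).2 hω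
    obtain ⟨w⟩ := hreach
    obtain ⟨L, hsupp, hedges⟩ := exists_chain_of_path w.toPath.1 w.toPath.2 hxy
    have hnd : (x :: (L ++ [y])).Nodup := by
      rw [← hsupp]; exact w.toPath.2.support_nodup
    have hAe : ∀ e ∈ chainEdges x L y, ω ∈ A e := by
      intro e he
      rw [← hedges] at he
      have h1 := SimpleGraph.Walk.edges_subset_edgeSet _ he
      have h2 : e ∈ G.edgeSet := SimpleGraph.edgeSet_mono sdiff_le h1
      rw [hG, SimpleGraph.edgeSet_fromEdgeSet] at h2
      exact h2.1
    have hAxy : ω ∈ A s(x, y) := by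
      rw [hG, SimpleGraph.fromEdgeSet_adj] at hadj
      exact hadj.1
    have hL : L ≠ [] := by
      intro h
      subst h
      have : s(x, y) ∈ chainEdges x ([] : List (Fin n)) y := by simp [chainEdges]
      rw [← hedges] at this
      have h1 := SimpleGraph.Walk.edges_subset_edgeSet _ this
      rw [SimpleGraph.mem_edgeSet, SimpleGraph.deleteEdges_adj] at h1
      exact h1.2 (Set.mem_singleton _)
    have hlen1 : 1 ≤ L.length := List.length_pos_iff.2 hL
    have hlenn : L.length ≤ n := by
      have := hnd.length_le_card
      simp only [List.length_cons, List.length_append, List.length_singleton,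
        Fintype.card_fin] at this
      omega
    simp only [Set.mem_iUnion]
    refine ⟨L.length, Finset.mem_Icc.2 ⟨hlen1, hlenn⟩, L, ?_, ?_⟩
    · rw [hT]
      exact Finset.mem_filter.2
        ⟨Finset.mem_image.2 ⟨L.get, Finset.mem_univ _, List.ofFn_get L⟩, hnd⟩
    · rw [hB]
      simp only [Set.mem_iInter, List.mem_toFinset, List.mem_cons]
      rintro e (rfl | he')
      · exact hAxy
      · exact hAe e he'
  -- probability of A e
  have hPA : ∀ e : Sym2 (Fin n), ¬e.IsDiag → ℙ (A e) = ENNReal.ofReal θ := by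
    intro e he
    rw [← hAθ e he, ENNReal.ofReal_toReal (measure_ne_top _ _)]
  -- Step 2: probability of B L
  have hPB : ∀ k ∈ Finset.Icc 1 n, ∀ L ∈ T k, ℙ (B L) = ENNReal.ofReal θ ^ (k + 2) := by
    intro k hk L hLmem
    rw [hT] at hLmem
    obtain ⟨hLim, hnd⟩ := Finset.mem_filter.1 hLmem
    obtain ⟨g, -, hg⟩ := Finset.mem_image.1 hLim
    have hLlen : L.length = k := by rw [← hg, List.length_ofFn]
    have hk1 : 1 ≤ k := (Finset.mem_Icc.1 hk).1
    have hL : L ≠ [] := by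
      intro h; rw [h] at hLlen; simp at hLlen; omega
    obtain ⟨v, l, rfl⟩ := List.exists_cons_of_ne_nil hL
    set S : Finset (Sym2 (Fin n)) := (s(x, y) :: chainEdges x (v :: l) y).toFinset with hS
    have hlistnd : (s(x, y) :: chainEdges x (v :: l) y).Nodup :=
      List.nodup_cons.2 ⟨base_not_mem_chainEdges hnd, chainEdges_nodup hnd⟩
    have hcard : S.card = k + 2 := by
      rw [hS, List.toFinset_card_of_nodup hlistnd, List.length_cons, chainEdges_length]
      omega
    have hSnd : ∀ e ∈ S, ¬e.IsDiag := by
      intro e he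
      rw [hS, List.mem_toFinset, List.mem_cons] at he
      rcases he with rfl | he
      · simpa [Sym2.mk_isDiag_iff] using hxy
      · exact not_isDiag_of_mem_chainEdges hnd e he
    have hset : B (v :: l) = ⋂ i ∈ S.subtype (fun e : Sym2 (Fin n) => ¬e.IsDiag), A i.1 := by
      rw [hB]
      ext ω'
      simp only [Set.mem_iInter, Finset.mem_subtype, List.mem_toFinset]
      constructor
      · intro h i hi
        exact h i.1 (by simpa [hS, List.mem_toFinset] using hi)
      · intro h e he
        exact h ⟨e, hSnd e (by simpa [hS, List.mem_toFinset] using he)⟩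
          (by simpa [hS, List.mem_toFinset] using he)
    rw [hset, hindep.meas_biInter]
    have : ∀ i ∈ S.subtype (fun e : Sym2 (Fin n) => ¬e.IsDiag), ℙ (A i.1) = ENNReal.ofReal θ := by
      intro i _
      exact hPA i.1 i.2
    rw [Finset.prod_congr rfl this, Finset.prod_const]
    congr 1
    rw [Finset.card_subtype, Finset.filter_true_of_mem hSnd, hcard]
  -- Step 3: assemble
  have hsum : ℙ {ω | s(x, y) ∈ ConnE (SimpleGraph.fromEdgeSet {e | ω ∈ A e})}
      ≤ ∑ k ∈ Finset.Icc 1 n, (↑(n ^ k) : ENNReal) * ENNReal.ofReal θ ^ (k + 2) := by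
    refine le_trans (measure_mono hincl) ?_
    refine le_trans (measure_biUnion_finset_le _ _) ?_
    refine Finset.sum_le_sum fun k hk => ?_
    refine le_trans (measure_biUnion_finset_le _ _) ?_
    calc ∑ L ∈ T k, ℙ (B L) = ∑ L ∈ T k, ENNReal.ofReal θ ^ (k + 2) :=
          Finset.sum_congr rfl (hPB k hk)
      _ = (T k).card * ENNReal.ofReal θ ^ (k + 2) := by
          rw [Finset.sum_const, nsmul_eq_mul]
      _ ≤ (↑(n ^ k) : ENNReal) * ENNReal.ofReal θ ^ (k + 2) := by
          apply mul_le_mul_left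
          have h1 : (T k).card ≤ n ^ k := by
            rw [hT]
            refine le_trans (Finset.card_filter_le _ _) ?_
            refine le_trans (Finset.card_image_le) ?_
            simp [Fintype.card_fun]
          exact_mod_cast h1
  have hofreal : (∑ k ∈ Finset.Icc 1 n, (↑(n ^ k) : ENNReal) * ENNReal.ofReal θ ^ (k + 2))
      = ENNReal.ofReal (∑ k ∈ Finset.Icc 1 n, (n : ℝ) ^ k * θ ^ (k + 2)) := by
    rw [ENNReal.ofReal_sum_of_nonneg]
    · refine Finset.sum_congr rfl fun k _ => ?_
      rw [ENNReal.ofReal_mul (by positivity), ENNReal.ofReal_pow hθ0]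
      congr 1
      rw [← ENNReal.ofReal_natCast (n ^ k)]
      congr 1
      push_cast
      ring
    · intro k _
      positivity
  have hreal : ∑ k ∈ Finset.Icc 1 n, (n : ℝ) ^ k * θ ^ (k + 2)
      ≤ (n : ℝ) * θ ^ 3 / (1 - (n : ℝ) * θ) := by
    have heq : ∀ k ∈ Finset.Icc 1 n, (n : ℝ) ^ k * θ ^ (k + 2) = θ ^ 2 * ((n : ℝ) * θ) ^ k := by
      intro k _
      rw [mul_pow, pow_add]
      ring
    rw [Finset.sum_congr rfl heq, ← Finset.mul_sum]
    have := geom_sum_Icc_le hr0 hsub n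
    calc θ ^ 2 * ∑ k ∈ Finset.Icc 1 n, ((n : ℝ) * θ) ^ k
        ≤ θ ^ 2 * ((n : ℝ) * θ / (1 - (n : ℝ) * θ)) := by
          apply mul_le_mul_of_nonneg_left this (by positivity)
      _ = (n : ℝ) * θ ^ 3 / (1 - (n : ℝ) * θ) := by ring
  have hfinal : ℙ {ω | s(x, y) ∈ ConnE (SimpleGraph.fromEdgeSet {e | ω ∈ A e})}
      ≤ ENNReal.ofReal ((n : ℝ) * θ ^ 3 / (1 - (n : ℝ) * θ)) := by
    refine le_trans hsum ?_
    rw [hofreal]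
    exact ENNReal.ofReal_le_ofReal hreal
  exact ENNReal.toReal_le_of_le_ofReal (by positivity) hfinal


end MSTNoise
end
end

section
/- Deterministic stability of the minimum spanning forest under weight perturbation off cycle maxima. Let G be a finite simple graph, let u and u' be two injective edge-weight functions on E(G), and let D = {e ∈ E(G) : u(e) ≠ u'(e)} be the set of edges where they differ. Suppose that for every cycle γ of G, the u-maximal edge of γ does not belong to D and the u'-maximal edge of γ does not belong to D. Then MSF(G, u) = MSF(G, u'). -/
open MeasureTheory ProbabilityTheory Filter SimpleGraph

noncomputable section

namespace MSTNoise

theorem msf_subset_aux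
    {V : Type} [Fintype V] (G : SimpleGraph V) (u u' : Sym2 V → ℝ)
    (hu : Set.InjOn u G.edgeSet)
    (hmax : ∀ (x : V) (c : G.Walk x x), c.IsCycle →
      ∀ e ∈ c.edges,
        ((∀ f ∈ c.edges, u f ≤ u e) → u e = u' e) ∧
        ((∀ f ∈ c.edges, u' f ≤ u' e) → u e = u' e)) :
    MSF G u ⊆ MSF G u' := by
  classical
  rintro e ⟨he, hmem⟩
  refine ⟨he, fun x y hexy hreach => ?_⟩
  have hadj : G.Adj x y := G.mem_edgeSet.mp (hexy ▸ he)
  obtain ⟨w⟩ := hreach.symm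
  set p : _root_.SimpleGraph.Walk _ y x := (w.toPath : _).1 with hp
  have hpath : p.IsPath := (w.toPath).2
  have hpe : ∀ f ∈ p.edges, f ∈ G.edgeSet ∧ u' f < u' e := by
    intro f hf
    have := p.edges_subset_edgeSet hf
    rw [SimpleGraph.edgeSet_fromEdgeSet] at this
    exact this.1
  have hsub : ∀ f ∈ p.edges, f ∈ G.edgeSet := fun f hf => (hpe f hf).1
  set q : G.Walk y x := p.transfer G hsub with hq
  have hqe : q.edges = p.edges := p.edges_transfer hsub
  have hqpath : q.IsPath := hpath.transfer hsub
  have henq : e ∉ q.edges := by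
    rw [hqe]
    intro hcon
    exact lt_irrefl (u' e) (hpe e hcon).2
  have hcyc : (SimpleGraph.Walk.cons hadj q).IsCycle :=
    SimpleGraph.Path.cons_isCycle ⟨q, hqpath⟩ hadj (hexy ▸ henq)
  set c : G.Walk x x := SimpleGraph.Walk.cons hadj q with hc
  have hce : c.edges = s(x, y) :: q.edges := rfl
  have hec : e ∈ c.edges := by rw [hce, hexy]; exact List.mem_cons_self
  -- e is the u'-maximal edge of c
  have hu'max : ∀ f ∈ c.edges, u' f ≤ u' e := by
    intro f hf
    rw [hce] at hf
    rcases List.mem_cons.mp hf with h | h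
    · rw [← hexy] at h; rw [h]
    · exact (le_of_lt (hpe f (hqe ▸ h)).2)
  have heq : u e = u' e := (hmax x c hcyc e hec).2 hu'max
  -- e is not the u-maximal edge of c (else contradict hmem)
  have hnotall : ¬ ∀ f ∈ c.edges, u f ≤ u e := by
    intro hall
    apply hmem x y hexy
    refine ⟨(q.transfer _ ?_).reverse⟩
    intro f hf
    rw [SimpleGraph.edgeSet_fromEdgeSet]
    have hfG : f ∈ G.edgeSet := q.edges_subset_edgeSet hf
    have hfe : f ≠ e := fun h => henq (h ▸ hf)
    have hle : u f ≤ u e := hall f (by rw [hce]; exact List.mem_cons_of_mem _ hf)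
    have hlt : u f < u e := lt_of_le_of_ne hle (fun h => hfe (hu hfG he h))
    exact ⟨⟨hfG, hlt⟩, G.not_isDiag_of_mem_edgeSet hfG⟩
  push_neg at hnotall
  obtain ⟨g, hg, hglt⟩ := hnotall
  -- take the u-maximal edge f₀ of c
  have hne : c.edges.toFinset.Nonempty := ⟨e, List.mem_toFinset.mpr hec⟩
  obtain ⟨f₀, hf₀mem, hf₀max⟩ := Finset.exists_max_image c.edges.toFinset u hne
  rw [List.mem_toFinset] at hf₀mem
  have hf₀max' : ∀ f ∈ c.edges, u f ≤ u f₀ := fun f hf =>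
    hf₀max f (List.mem_toFinset.mpr hf)
  have heqf₀ : u f₀ = u' f₀ := (hmax x c hcyc f₀ hf₀mem).1 hf₀max'
  have hlt₀ : u e < u f₀ := lt_of_lt_of_le hglt (hf₀max' g hg)
  have hf₀ne : f₀ ≠ e := fun h => absurd (h ▸ hlt₀) (lt_irrefl _)
  have hf₀q : f₀ ∈ q.edges := by
    rw [hce] at hf₀mem
    rcases List.mem_cons.mp hf₀mem with h | h
    · exact absurd (hexy ▸ h : f₀ = e) hf₀ne
    · exact h
  have : u' f₀ < u' e := (hpe f₀ (hqe ▸ hf₀q)).2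
  linarith

/-- **Deterministic stability of the minimum spanning forest under weight perturbation off
cycle maxima.** If for every cycle of `G` neither the `u`-maximal edge nor the
`u'`-maximal edge lies in the set `D` of edges where `u` and `u'` differ, then
`MSF (G, u) = MSF (G, u')`. -/
theorem msf_stable_off_cycle_maxima
    {V : Type} [Fintype V] (G : SimpleGraph V) (u u' : Sym2 V → ℝ)
    (hu : Set.InjOn u G.edgeSet) (hu' : Set.InjOn u' G.edgeSet)
    (hmax : ∀ (x : V) (c : G.Walk x x), c.IsCycle →
      ∀ e ∈ c.edges,
        ((∀ f ∈ c.edges, u f ≤ u e) → u e = u' e) ∧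
        ((∀ f ∈ c.edges, u' f ≤ u' e) → u e = u' e)) :
    MSF G u = MSF G u' := by
  refine Set.Subset.antisymm (msf_subset_aux G u u' hu hmax) (msf_subset_aux G u' u hu' ?_)
  intro x c hc e he
  obtain ⟨h1, h2⟩ := hmax x c hc e he
  exact ⟨fun h => (h2 h).symm, fun h => (h1 h).symm⟩

end MSTNoise
end
end

section
/- Identical cycle breaking on two graphs with common cycle structure and common weights on cycle edges. Let G_1 and G_2 be finite simple graphs on a common vertex set with Conn(G_1) = Conn(G_2) = C (equality as edge sets). Let u_1 : E(G_1) → ℝ and u_2 : E(G_2) → ℝ be injective weight functions such that u_1(e) = u_2(e) for every e ∈ C. Then the sets of edges removed by cycle breaking coincide: E(G_1) \ MSF(G_1, u_1) = E(G_2) \ MSF(G_2, u_2). Consequently, the symmetric difference of the two minimum spanning forests equals the symmetric difference of the two graphs: MSF(G_1,u_1) Δ MSF(G_2,u_2) = E(G_1) Δ E(G_2). -/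
/-!
An edge `e = s(x, y)` leaves the minimum spanning forest exactly when `x` and `y` are joined by a
path of lighter edges. Such a path closes up with `e` to a cycle, so `e` and every edge of the
path lie in `Conn(G)`: the removed edges are determined by `Conn(G)` and the weights on it alone.
Since both forests are contained in their graphs, equal removed sets force
`MSF₁ Δ MSF₂ = E(G₁) Δ E(G₂)`.
-/

open MeasureTheory ProbabilityTheory Filter SimpleGraph

noncomputable section

namespace MSTNoise

variable {V : Type*}

theorem connE_subset_edgeSet (G : SimpleGraph V) : ConnE G ⊆ G.edgeSet :=
  fun _ ⟨_, c, _, he⟩ => c.edges_subset_edgeSet he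

theorem MSF_subset_edgeSet (G : SimpleGraph V) (u : Sym2 V → ℝ) : MSF G u ⊆ G.edgeSet :=
  fun _ he => he.1

/-- An `S`-path from `y` to `x` closes up with the edge `s(x, y) ∉ S` to a cycle of `G`. -/
theorem mem_connE_and_reachable_inter_connE {G : SimpleGraph V} {S : Set (Sym2 V)}
    (hS : S ⊆ G.edgeSet) {x y : V} (hxy : G.Adj x y) (he : s(x, y) ∉ S)
    (h : (fromEdgeSet S).Reachable x y) :
    s(x, y) ∈ ConnE G ∧ (fromEdgeSet (S ∩ ConnE G)).Reachable x y := by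
  classical
  obtain ⟨p, hp⟩ := h.symm.some.toPath
  have hpS : ∀ f ∈ p.edges, f ∈ S := fun f hf =>
    (edgeSet_fromEdgeSet S ▸ p.edges_subset_edgeSet hf).1
  have hpG : ∀ f ∈ p.edges, f ∈ G.edgeSet := fun f hf => hS (hpS f hf)
  have hc : (Walk.cons hxy (p.transfer G hpG)).IsCycle := by
    rw [Walk.cons_isCycle_iff, Walk.edges_transfer]
    exact ⟨hp.transfer hpG, fun hmem => he (hpS _ hmem)⟩
  have hcycle : ∀ f ∈ (Walk.cons hxy (p.transfer G hpG)).edges, f ∈ ConnE G :=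
    fun f hf => ⟨x, _, hc, hf⟩
  refine ⟨hcycle _ (by simp), ⟨(p.transfer _ fun f hf => ?_).reverse⟩⟩
  rw [edgeSet_fromEdgeSet]
  refine ⟨⟨hpS f hf, hcycle f (by simp [Walk.edges_transfer, hf])⟩, ?_⟩
  exact G.not_isDiag_of_mem_edgeSet (hpG f hf)

/-- The edges deleted by cycle breaking, when `C` is the set of edges lying on cycles. -/
def brokenEdges (C : Set (Sym2 V)) (u : Sym2 V → ℝ) : Set (Sym2 V) :=
  {e | e ∈ C ∧ ∃ x y : V, e = s(x, y) ∧ (fromEdgeSet {f | f ∈ C ∧ u f < u e}).Reachable x y}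

theorem brokenEdges_congr {C : Set (Sym2 V)} {u₁ u₂ : Sym2 V → ℝ} (h : ∀ e ∈ C, u₁ e = u₂ e) :
    brokenEdges C u₁ = brokenEdges C u₂ := by
  ext e
  refine and_congr_right fun he => ?_
  have hlt : {f | f ∈ C ∧ u₁ f < u₁ e} = {f | f ∈ C ∧ u₂ f < u₂ e} :=
    Set.ext fun f => and_congr_right fun hf => by rw [h f hf, h e he]
  simp only [hlt]

theorem edgeSet_diff_MSF (G : SimpleGraph V) (u : Sym2 V → ℝ) :
    G.edgeSet \ MSF G u = brokenEdges (ConnE G) u := by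
  ext e
  constructor
  · rintro ⟨heG, heMSF⟩
    simp only [MSF, Set.mem_ofPred_eq, not_and, not_forall, not_not] at heMSF
    obtain ⟨x, y, rfl, hreach⟩ := heMSF heG
    have hS : {f | f ∈ G.edgeSet ∧ u f < u s(x, y)} ⊆ G.edgeSet := fun _ hf => hf.1
    obtain ⟨hconn, hreach'⟩ :=
      mem_connE_and_reachable_inter_connE hS heG (fun h => lt_irrefl _ h.2) hreach
    exact ⟨hconn, x, y, rfl, hreach'.mono (fromEdgeSet_mono fun f hf => ⟨hf.2, hf.1.2⟩)⟩
  · rintro ⟨hconn, x, y, rfl, hreach⟩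
    refine ⟨connE_subset_edgeSet G hconn, fun heMSF => heMSF.2 x y rfl (hreach.mono ?_)⟩
    exact fromEdgeSet_mono fun f hf => ⟨connE_subset_edgeSet G hf.1, hf.2⟩

theorem symmDiff_eq_symmDiff_of_diff_eq {α : Type*} {A B E F : Set α} (hA : A ⊆ E)
    (hB : B ⊆ F) (h : E \ A = F \ B) : symmDiff A B = symmDiff E F := by
  ext a
  have ha := Set.ext_iff.1 h a
  have hAa := @hA a
  have hBb := @hB a
  simp only [Set.mem_symmDiff, Set.mem_sdiff] at ha ⊢
  tauto

theorem cycle_breaking_common_general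
    {V : Type} (G₁ G₂ : SimpleGraph V)
    (hConn : ConnE G₁ = ConnE G₂)
    (u₁ u₂ : Sym2 V → ℝ)
    (hagree : ∀ e ∈ ConnE G₁, u₁ e = u₂ e) :
    G₁.edgeSet \ MSF G₁ u₁ = G₂.edgeSet \ MSF G₂ u₂ ∧
      symmDiff (MSF G₁ u₁) (MSF G₂ u₂) = symmDiff G₁.edgeSet G₂.edgeSet := by
  have hbroken : G₁.edgeSet \ MSF G₁ u₁ = G₂.edgeSet \ MSF G₂ u₂ := by
    rw [edgeSet_diff_MSF, edgeSet_diff_MSF, ← hConn, brokenEdges_congr hagree]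
  exact ⟨hbroken, symmDiff_eq_symmDiff_of_diff_eq (MSF_subset_edgeSet G₁ u₁)
    (MSF_subset_edgeSet G₂ u₂) hbroken⟩

/-- **Identical cycle breaking on two graphs with common cycle structure and common
weights on cycle edges.** If `Conn(G₁) = Conn(G₂)` and the injective weights agree on
this common set, then the sets of removed edges coincide, and consequently the symmetric
difference of the minimum spanning forests equals that of the edge sets. -/
theorem cycle_breaking_common
    {V : Type} [Fintype V] (G₁ G₂ : SimpleGraph V)
    (hConn : ConnE G₁ = ConnE G₂)
    (u₁ u₂ : Sym2 V → ℝ)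
    (hu₁ : Set.InjOn u₁ G₁.edgeSet) (hu₂ : Set.InjOn u₂ G₂.edgeSet)
    (hagree : ∀ e ∈ ConnE G₁, u₁ e = u₂ e) :
    G₁.edgeSet \ MSF G₁ u₁ = G₂.edgeSet \ MSF G₂ u₂ ∧
      symmDiff (MSF G₁ u₁) (MSF G₂ u₂) = symmDiff G₁.edgeSet G₂.edgeSet :=
  cycle_breaking_common_general G₁ G₂ hConn u₁ u₂ hagree

end MSTNoise
end
end

section
/- Independence of the two minimum spanning forests when the shared weights avoid the common cycle edges. Let G_1 and G_2 be finite simple graphs on a common vertex set and let H ⊆ E(G_1) ∩ E(G_2). On a probability space, let (u_e)_{e ∈ E(G_1) ∪ E(G_2)} and (v_e)_{e ∈ E(G_2) \ H} be mutually independent uniform [0,1] random variables. Define weights w_1(e) = u_e for e ∈ E(G_1), and w_2(e) = u_e for e ∈ H, w_2(e) = v_e for e ∈ E(G_2) \ H (almost surely each of w_1, w_2 is injective, so the minimum spanning forests are well defined almost surely). If H ∩ Conn(G_1) ∩ Conn(G_2) = ∅, then the random edge sets MSF(G_1, w_1) and MSF(G_2, w_2) are independent. -/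
open MeasureTheory ProbabilityTheory Filter SimpleGraph

noncomputable section

namespace MSTNoise

section Helpers

private lemma connE_subset {V : Type*} {G : SimpleGraph V} {e : Sym2 V}
    (he : e ∈ ConnE G) : e ∈ G.edgeSet := by
  obtain ⟨x, c, _, hmem⟩ := he
  exact c.edges_subset_edgeSet hmem

private lemma reach_transfer {V : Type*} {G : SimpleGraph V} {u u' : Sym2 V → ℝ}
    (h : ∀ f ∈ ConnE G, u f = u' f) {x y : V} (he : s(x, y) ∈ G.edgeSet)
    (hr : (SimpleGraph.fromEdgeSet {f | f ∈ G.edgeSet ∧ u' f < u' s(x, y)}).Reachable x y) :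
    (SimpleGraph.fromEdgeSet {f | f ∈ G.edgeSet ∧ u f < u s(x, y)}).Reachable x y := by
  classical
  set S' : Set (Sym2 V) := {f | f ∈ G.edgeSet ∧ u' f < u' s(x, y)} with hS'
  obtain ⟨w⟩ := hr
  obtain ⟨q, hqp⟩ : ∃ q : (SimpleGraph.fromEdgeSet S').Walk x y, q.IsPath :=
    ⟨w.toPath.1, w.toPath.2⟩
  have hqe : ∀ f ∈ q.edges, f ∈ S' := by
    intro f hf
    have := q.edges_subset_edgeSet hf
    rw [SimpleGraph.edgeSet_fromEdgeSet] at this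
    exact this.1
  have hGe : ∀ f ∈ q.edges, f ∈ G.edgeSet := fun f hf => (hqe f hf).1
  set r : G.Walk x y := q.transfer G hGe with hrdef
  have hre : r.edges = q.edges := q.edges_transfer hGe
  have hrp : r.IsPath := hqp.transfer hGe
  have hadj : G.Adj x y := he
  have hxy : s(x, y) ∉ r.reverse.edges := by
    rw [SimpleGraph.Walk.edges_reverse, List.mem_reverse, hre]
    intro hmem
    exact lt_irrefl _ (hqe _ hmem).2
  have hcyc : (SimpleGraph.Walk.cons hadj r.reverse).IsCycle :=
    (SimpleGraph.Walk.cons_isCycle_iff _ hadj).2 ⟨hrp.reverse, hxy⟩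
  have hconn : ∀ f ∈ q.edges, f ∈ ConnE G := by
    intro f hf
    refine ⟨x, _, hcyc, ?_⟩
    rw [SimpleGraph.Walk.edges_cons]
    refine List.mem_cons_of_mem _ ?_
    rw [SimpleGraph.Walk.edges_reverse, List.mem_reverse, hre]
    exact hf
  have hecon : s(x, y) ∈ ConnE G := by
    refine ⟨x, _, hcyc, ?_⟩
    rw [SimpleGraph.Walk.edges_cons]
    exact List.mem_cons_self
  refine ⟨r.transfer _ ?_⟩
  intro f hf
  rw [hre] at hf
  rw [SimpleGraph.edgeSet_fromEdgeSet]
  refine ⟨⟨(hqe f hf).1, ?_⟩, G.not_isDiag_of_mem_edgeSet (hGe f hf)⟩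
  rw [h f (hconn f hf), h _ hecon]
  exact (hqe f hf).2

private lemma msf_congr {V : Type*} {G : SimpleGraph V} {u u' : Sym2 V → ℝ}
    (h : ∀ f ∈ ConnE G, u f = u' f) : MSF G u = MSF G u' := by
  have key : ∀ (u u' : Sym2 V → ℝ), (∀ f ∈ ConnE G, u f = u' f) →
      MSF G u ⊆ MSF G u' := by
    intro u u' h e he
    obtain ⟨heG, hne⟩ := he
    refine ⟨heG, fun x y hxy hr => ?_⟩
    subst hxy
    exact hne x y rfl (reach_transfer h heG hr)
  exact le_antisymm (key u u' h) (key u' u fun f hf => (h f hf).symm)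

private lemma measurableSet_preimage_setOf {α β : Type*} [MeasurableSpace α] [Finite β]
    (g : α → Set β) (hg : ∀ b, MeasurableSet {a | b ∈ g a}) (s : Set (Set β)) :
    MeasurableSet (g ⁻¹' s) := by
  classical
  have hrw : g ⁻¹' s =
      ⋃ T ∈ s, ⋂ b : β, if b ∈ T then {a | b ∈ g a} else {a | b ∈ g a}ᶜ := by
    ext a
    simp only [Set.mem_preimage, Set.mem_iUnion, Set.mem_iInter, exists_prop]
    constructor
    · intro h
      refine ⟨g a, h, fun b => ?_⟩
      by_cases hb : b ∈ g a <;> simp [hb]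
    · rintro ⟨T, hT, h⟩
      have hga : g a = T := by
        ext b
        have hb := h b
        by_cases hbT : b ∈ T
        · simp only [if_pos hbT] at hb
          simp only [hbT, iff_true]
          exact hb
        · simp only [if_neg hbT] at hb
          simp only [hbT, iff_false]
          exact hb
      rwa [hga]
  rw [hrw]
  refine MeasurableSet.biUnion (Set.to_countable s) fun T _ =>
    MeasurableSet.iInter fun b => ?_
  by_cases hb : b ∈ T
  · simpa [hb] using hg b
  · simpa [hb] using (hg b).compl

private lemma measurable_msf {V : Type*} [Finite V] {α : Type*} [MeasurableSpace α]
    (G : SimpleGraph V) (v : Sym2 V → α → ℝ) (hv : ∀ e, Measurable (v e)) :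
    @Measurable α (Set (Sym2 V)) _ ⊤ (fun a => MSF G (fun e => v e a)) := by
  classical
  intro s _
  apply measurableSet_preimage_setOf
  intro e
  by_cases heG : e ∈ G.edgeSet
  · have hrw : {a | e ∈ MSF G (fun f => v f a)} =
        (fun a => {f | f ∈ G.edgeSet ∧ v f a < v e a}) ⁻¹'
          {T : Set (Sym2 V) | ∀ x y : V, e = s(x, y) →
            ¬ (SimpleGraph.fromEdgeSet T).Reachable x y} := by
      ext a
      simp only [Set.mem_setOf_eq, Set.mem_preimage, MSF, heG, true_and]
    rw [hrw]
    apply measurableSet_preimage_setOf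
    intro f
    by_cases hfG : f ∈ G.edgeSet
    · have hrw2 : {a | f ∈ {f | f ∈ G.edgeSet ∧ v f a < v e a}} = {a | v f a < v e a} := by
        ext a; simp [hfG]
      rw [hrw2]
      exact measurableSet_lt (hv f) (hv e)
    · have hrw2 : {a | f ∈ {f | f ∈ G.edgeSet ∧ v f a < v e a}} = ∅ := by
        ext a; simp [hfG]
      rw [hrw2]
      exact MeasurableSet.empty
  · have hrw : {a | e ∈ MSF G (fun f => v f a)} = ∅ := by
      ext a
      simp only [Set.mem_setOf_eq, Set.mem_empty_iff_false, iff_false]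
      exact fun h => heG h.1
    rw [hrw]
    exact MeasurableSet.empty

private lemma iIndepFun_ae_congr {Ω' ι : Type*} [MeasurableSpace Ω'] {μ : Measure Ω'}
    {β : ι → Type*} {m : ∀ i, MeasurableSpace (β i)} {f g : ∀ i, Ω' → β i}
    (hf : iIndepFun (m := m) f μ) (h : ∀ i, f i =ᵐ[μ] g i) : iIndepFun (m := m) g μ := by
  rw [iIndepFun_iff_measure_inter_preimage_eq_mul] at hf ⊢
  intro S sets hsets
  have h1 : ∀ i ∈ S, (g i ⁻¹' sets i : Set Ω') =ᵐ[μ] (f i ⁻¹' sets i : Set Ω') := by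
    intro i _
    filter_upwards [h i] with ω hω
    show (ω ∈ g i ⁻¹' sets i) = (ω ∈ f i ⁻¹' sets i)
    simp only [Set.mem_preimage, hω]
  have hae : ∀ᵐ ω ∂μ, ∀ i ∈ S, f i ω = g i ω :=
    (MeasureTheory.ae_ball_iff S.countable_toSet).2 fun i _ => h i
  calc μ (⋂ i ∈ S, g i ⁻¹' sets i) = μ (⋂ i ∈ S, f i ⁻¹' sets i) := by
        apply measure_congr
        filter_upwards [hae] with ω hω
        show (ω ∈ ⋂ i ∈ S, g i ⁻¹' sets i) = (ω ∈ ⋂ i ∈ S, f i ⁻¹' sets i)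
        simp only [Set.mem_iInter, Set.mem_preimage]
        exact propext (forall_congr' fun i => forall_congr' fun hi => by rw [hω i hi])
    _ = ∏ i ∈ S, μ (f i ⁻¹' sets i) := hf S hsets
    _ = ∏ i ∈ S, μ (g i ⁻¹' sets i) :=
        Finset.prod_congr rfl fun i hi => (measure_congr (h1 i hi)).symm

private lemma aemeasurable_of_map_uniform {Ω' : Type*} [MeasureSpace Ω'] {f : Ω' → ℝ}
    (h : Measure.map f ℙ = uniform01) : AEMeasurable f ℙ := by
  by_contra hf
  rw [MeasureTheory.Measure.map_of_not_aemeasurable hf] at h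
  have h2 := congrArg (fun μ : Measure ℝ => μ Set.univ) h
  simp only [Measure.coe_zero, Pi.zero_apply, uniform01,
    MeasureTheory.Measure.restrict_apply_univ, Real.volume_Icc] at h2
  norm_num at h2

end Helpers


open scoped Classical in
/-- **Independence of the two minimum spanning forests when the shared weights avoid the
common cycle edges.** If `H ∩ Conn(G₁) ∩ Conn(G₂) = ∅`, then `MSF(G₁, w₁)` and
`MSF(G₂, w₂)` are independent. -/
theorem msf_independent
    {V : Type} [Fintype V] (G₁ G₂ : SimpleGraph V) (H : Set (Sym2 V))
    (hH : H ⊆ G₁.edgeSet ∩ G₂.edgeSet)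
    (Ω : Type) (mΩ : MeasureSpace Ω) (hprob : IsProbabilityMeasure (ℙ : Measure Ω))
    (U W : Sym2 V → Ω → ℝ)
    (hU : ∀ e ∈ G₁.edgeSet ∪ G₂.edgeSet, Measure.map (U e) ℙ = uniform01)
    (hW : ∀ e ∈ G₂.edgeSet \ H, Measure.map (W e) ℙ = uniform01)
    (hindep : iIndepFun
      (fun i : {e : Sym2 V // e ∈ G₁.edgeSet ∪ G₂.edgeSet} ⊕
          {e : Sym2 V // e ∈ G₂.edgeSet \ H} =>
        Sum.elim (fun e : {e : Sym2 V // e ∈ G₁.edgeSet ∪ G₂.edgeSet} => U e.1)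
          (fun e : {e : Sym2 V // e ∈ G₂.edgeSet \ H} => W e.1) i) ℙ)
    (hdisj : H ∩ ConnE G₁ ∩ ConnE G₂ = ∅) :
    @IndepFun Ω (Set (Sym2 V)) (Set (Sym2 V)) _ ⊤ ⊤
      (fun ω => MSF G₁ (fun e => U e ω))
      (fun ω => MSF G₂ (fun e => if e ∈ H then U e ω else W e ω)) ℙ := by
  classical
  haveI := hprob
  -- measurable modifications of `U` and `W`
  have hUae : ∀ e ∈ G₁.edgeSet ∪ G₂.edgeSet, AEMeasurable (U e) ℙ := fun e he =>
    aemeasurable_of_map_uniform (hU e he)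
  have hWae : ∀ e ∈ G₂.edgeSet \ H, AEMeasurable (W e) ℙ := fun e he =>
    aemeasurable_of_map_uniform (hW e he)
  set U' : Sym2 V → Ω → ℝ := fun e =>
    if h : e ∈ G₁.edgeSet ∪ G₂.edgeSet then (hUae e h).mk (U e) else fun _ => 0 with hU'def
  set W' : Sym2 V → Ω → ℝ := fun e =>
    if h : e ∈ G₂.edgeSet \ H then (hWae e h).mk (W e) else fun _ => 0 with hW'def
  have hU'meas : ∀ e, Measurable (U' e) := by
    intro e
    by_cases h : e ∈ G₁.edgeSet ∪ G₂.edgeSet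
    · simp only [hU'def, dif_pos h]; exact (hUae e h).measurable_mk
    · simp only [hU'def, dif_neg h]; exact measurable_const
  have hW'meas : ∀ e, Measurable (W' e) := by
    intro e
    by_cases h : e ∈ G₂.edgeSet \ H
    · simp only [hW'def, dif_pos h]; exact (hWae e h).measurable_mk
    · simp only [hW'def, dif_neg h]; exact measurable_const
  have hU'ae : ∀ e ∈ G₁.edgeSet ∪ G₂.edgeSet, U e =ᵐ[ℙ] U' e := by
    intro e he
    simp only [hU'def, dif_pos he]
    exact (hUae e he).ae_eq_mk
  have hW'ae : ∀ e ∈ G₂.edgeSet \ H, W e =ᵐ[ℙ] W' e := by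
    intro e he
    simp only [hW'def, dif_pos he]
    exact (hWae e he).ae_eq_mk
  set ι := {e : Sym2 V // e ∈ G₁.edgeSet ∪ G₂.edgeSet} ⊕ {e : Sym2 V // e ∈ G₂.edgeSet \ H}
    with hιdef
  set f' : ι → Ω → ℝ := Sum.elim (fun e => U' e.1) (fun e => W' e.1) with hf'def
  have hindep' : iIndepFun f' ℙ := by
    refine iIndepFun_ae_congr hindep ?_
    rintro (e | e)
    · exact hU'ae e.1 e.2
    · exact hW'ae e.1 e.2
  have hf'meas : ∀ i : ι, Measurable (f' i) := by
    rintro (e | e)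
    · exact hU'meas e.1
    · exact hW'meas e.1
  haveI : Fintype ι := Fintype.ofFinite ι
  set p₁ : ι → Prop := Sum.elim (fun e => e.1 ∈ ConnE G₁) (fun _ => False) with hp₁def
  set p₂ : ι → Prop :=
    Sum.elim (fun e => e.1 ∈ H ∧ e.1 ∈ ConnE G₂) (fun e => e.1 ∈ ConnE G₂) with hp₂def
  set S : Finset ι := Finset.univ.filter p₁ with hSdef
  set T : Finset ι := Finset.univ.filter p₂ with hTdef
  have hST : Disjoint S T := by
    rw [Finset.disjoint_left]
    rintro (e | e) hS hT
    · rw [hSdef, Finset.mem_filter] at hS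
      rw [hTdef, Finset.mem_filter] at hT
      have h1 : e.1 ∈ ConnE G₁ := hS.2
      have h2 : e.1 ∈ H ∧ e.1 ∈ ConnE G₂ := hT.2
      have : e.1 ∈ H ∩ ConnE G₁ ∩ ConnE G₂ := ⟨⟨h2.1, h1⟩, h2.2⟩
      rw [hdisj] at this
      exact this
    · rw [hSdef, Finset.mem_filter] at hS
      exact hS.2
  have hbase := hindep'.indepFun_finset S T hST hf'meas
  -- the functions of the two tuples
  set v₁ : Sym2 V → ({i // i ∈ S} → ℝ) → ℝ := fun e x =>
    if h : e ∈ ConnE G₁ then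
      x ⟨Sum.inl ⟨e, Or.inl (connE_subset h)⟩, by
        rw [hSdef, Finset.mem_filter]
        exact ⟨Finset.mem_univ _, h⟩⟩
    else 0 with hv₁def
  set v₂ : Sym2 V → ({i // i ∈ T} → ℝ) → ℝ := fun e x =>
    if h : e ∈ ConnE G₂ then
      (if h2 : e ∈ H then
        x ⟨Sum.inl ⟨e, Or.inr (hH h2).2⟩, by
          rw [hTdef, Finset.mem_filter]
          exact ⟨Finset.mem_univ _, h2, h⟩⟩
      else
        x ⟨Sum.inr ⟨e, ⟨connE_subset h, h2⟩⟩, by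
          rw [hTdef, Finset.mem_filter]
          exact ⟨Finset.mem_univ _, h⟩⟩)
    else 0 with hv₂def
  have hv₁meas : ∀ e, Measurable (v₁ e) := by
    intro e
    by_cases h : e ∈ ConnE G₁
    · simp only [hv₁def, dif_pos h]; exact measurable_pi_apply _
    · simp only [hv₁def, dif_neg h]; exact measurable_const
  have hv₂meas : ∀ e, Measurable (v₂ e) := by
    intro e
    by_cases h : e ∈ ConnE G₂
    · by_cases h2 : e ∈ H
      · simp only [hv₂def, dif_pos h, dif_pos h2]; exact measurable_pi_apply _
      · simp only [hv₂def, dif_pos h, dif_neg h2]; exact measurable_pi_apply _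
    · simp only [hv₂def, dif_neg h]; exact measurable_const
  have hφ₁ : @Measurable _ (Set (Sym2 V)) _ ⊤ (fun x => MSF G₁ (fun e => v₁ e x)) :=
    measurable_msf G₁ v₁ hv₁meas
  have hφ₂ : @Measurable _ (Set (Sym2 V)) _ ⊤ (fun x => MSF G₂ (fun e => v₂ e x)) :=
    measurable_msf G₂ v₂ hv₂meas
  have hcomp := hbase.comp hφ₁ hφ₂
  refine ProbabilityTheory.IndepFun.congr hcomp ?_ ?_
  · have haeU : ∀ᵐ ω ∂ℙ, ∀ e ∈ G₁.edgeSet ∪ G₂.edgeSet, U e ω = U' e ω :=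
      (MeasureTheory.ae_ball_iff (Set.to_countable _)).2 hU'ae
    filter_upwards [haeU] with ω hω
    show MSF G₁ (fun e => v₁ e (fun i : {i // i ∈ S} => f' i.1 ω)) =
      MSF G₁ (fun e => U e ω)
    apply msf_congr
    intro f hf
    have hfe : f ∈ G₁.edgeSet ∪ G₂.edgeSet := Or.inl (connE_subset hf)
    simp only [hv₁def, dif_pos hf, hf'def, Sum.elim_inl]
    exact (hω f hfe).symm
  · have haeU : ∀ᵐ ω ∂ℙ, ∀ e ∈ G₁.edgeSet ∪ G₂.edgeSet, U e ω = U' e ω :=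
      (MeasureTheory.ae_ball_iff (Set.to_countable _)).2 hU'ae
    have haeW : ∀ᵐ ω ∂ℙ, ∀ e ∈ G₂.edgeSet \ H, W e ω = W' e ω :=
      (MeasureTheory.ae_ball_iff (Set.to_countable _)).2 hW'ae
    filter_upwards [haeU, haeW] with ω hωU hωW
    show MSF G₂ (fun e => v₂ e (fun i : {i // i ∈ T} => f' i.1 ω)) =
      MSF G₂ (fun e => if e ∈ H then U e ω else W e ω)
    apply msf_congr
    intro f hf
    by_cases h2 : f ∈ H
    · have hfe : f ∈ G₁.edgeSet ∪ G₂.edgeSet := Or.inr (hH h2).2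
      simp only [hv₂def, dif_pos hf, dif_pos h2, hf'def, Sum.elim_inl, if_pos h2]
      exact (hωU f hfe).symm
    · have hfe : f ∈ G₂.edgeSet \ H := ⟨connE_subset hf, h2⟩
      simp only [hv₂def, dif_pos hf, dif_neg h2, hf'def, Sum.elim_inr, if_neg h2]
      exact (hωW f hfe).symm


end MSTNoise
end
end

section
/- Correlation inequality for component sizes in an Erdős–Rényi graph with one edge removed (inequality (Y2a) of the paper). Let n ≥ 2, θ ∈ [0,1], fix two distinct vertices u, v, and let G be a random graph on n labelled vertices in which every possible edge other than {u,v} is present independently with probability θ (and {u,v} is absent). Let C(u) and C(v) denote the connected components of u and v in G. Then E[ 1_{C(u) ≠ C(v)} · |C(u)|^2 · |C(v)|^2 ] ≤ ( E[ |C(u)|^2 ] )^2, where |C(x)| denotes the number of vertices of C(x). (In the paper the right-hand side is E[Y^2]^2 with Y the component size of a fixed vertex in G(n,θ); by symmetry and monotone coupling E[|C(u)|^2] is at most that quantity.) -/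
open MeasureTheory ProbabilityTheory Filter SimpleGraph

noncomputable section

namespace MSTNoise
namespace CompCorr
open scoped Classical
noncomputable section
variable {n : ℕ} (u v : Fin n) (θ : ℝ)


abbrev EI (u v : Fin n) : Type := {e : Sym2 (Fin n) // ¬e.IsDiag ∧ e ≠ s(u, v)}

def gr (g : EI u v → Bool) : SimpleGraph (Fin n) :=
  SimpleGraph.fromEdgeSet {e | ∃ h : ¬e.IsDiag ∧ e ≠ s(u, v), g ⟨e, h⟩ = true}

def reach (x : Fin n) (g : EI u v → Bool) : Set (Fin n) := {y | (gr u v g).Reachable x y}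

def AS (S : Set (Fin n)) : Set (EI u v) := {e | ∀ x ∈ e.1, x ∉ S}

def phi (u v : Fin n) : Fin n → Fin n := fun x => if x = v then u else x

def bw (θ : ℝ) : Bool → ℝ := fun b => if b then θ else 1 - θ

def W (g : EI u v → Bool) : ℝ := ∏ e, bw θ (g e)
lemma gr_adj {g : EI u v → Bool} {x y : Fin n} :
    (gr u v g).Adj x y ↔ ∃ h : ¬(s(x,y)).IsDiag ∧ s(x,y) ≠ s(u,v), g ⟨s(x,y), h⟩ = true := by
  rw [gr, SimpleGraph.fromEdgeSet_adj]
  constructor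
  · rintro ⟨h, -⟩; exact h
  · rintro ⟨h, hg⟩
    refine ⟨⟨h, hg⟩, ?_⟩
    intro hxy
    exact h.1 (Sym2.mk_isDiag_iff.2 hxy)

lemma walk_subset {G : SimpleGraph (Fin n)} {S : Set (Fin n)}
    (hcl : ∀ a b, a ∈ S → G.Adj a b → b ∈ S)
    {x y : Fin n} (w : G.Walk x y) (hx : x ∈ S) : y ∈ S := by
  induction w with
  | nil => exact hx
  | cons h p ih => exact ih (hcl _ _ hx h)

lemma reach_eq_of_agree {g g1 : EI u v → Bool}
    (hag : ∀ e : EI u v, (∃ x ∈ e.1, x ∈ reach u v u g) → g1 e = g e) :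
    reach u v u g1 = reach u v u g := by
  set S := reach u v u g with hS
  have hadj_iff : ∀ a b : Fin n, a ∈ S → ((gr u v g).Adj a b ↔ (gr u v g1).Adj a b) := by
    intro a b ha
    rw [gr_adj, gr_adj]
    constructor
    · rintro ⟨h, hg⟩
      exact ⟨h, by rw [hag ⟨s(a,b), h⟩ ⟨a, Sym2.mem_mk_left _ _, ha⟩]; exact hg⟩
    · rintro ⟨h, hg⟩
      exact ⟨h, by rw [← hag ⟨s(a,b), h⟩ ⟨a, Sym2.mem_mk_left _ _, ha⟩]; exact hg⟩
  have hclS : ∀ a b, a ∈ S → (gr u v g).Adj a b → b ∈ S := by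
    intro a b ha hadj
    exact Set.mem_setOf.2 ((Set.mem_setOf.1 ha).trans hadj.reachable)
  have hu : u ∈ S := Set.mem_setOf.2 (SimpleGraph.Reachable.refl u)
  apply Set.eq_of_subset_of_subset
  · -- reach g1 ⊆ S
    intro y hy
    obtain ⟨w⟩ := (Set.mem_setOf.1 hy : (gr u v g1).Reachable u y)
    exact walk_subset (fun a b ha hadj => hclS a b ha ((hadj_iff a b ha).2 hadj)) w hu
  · -- S ⊆ reach g1
    intro y hy
    obtain ⟨w⟩ := (Set.mem_setOf.1 hy : (gr u v g).Reachable u y)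
    have key : y ∈ {z | z ∈ S ∧ (gr u v g1).Reachable u z} := by
      refine walk_subset ?_ w ⟨hu, SimpleGraph.Reachable.refl u⟩
      rintro a b ⟨haS, har⟩ hadj
      exact ⟨hclS a b haS hadj, har.trans ((hadj_iff a b haS).1 hadj).reachable⟩
    exact key.2

lemma card_reach_le {g g2 : EI u v → Bool} (φ : Fin n → Fin n)
    (hφv : φ v = u)
    (hinj : Set.InjOn φ (reach u v v g))
    (hadj : ∀ x y, x ∈ reach u v v g → (gr u v g).Adj x y → (gr u v g2).Adj (φ x) (φ y)) :
    Nat.card (reach u v v g) ≤ Nat.card (reach u v u g2) := by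
  have hcl : ∀ a b, a ∈ reach u v v g → (gr u v g).Adj a b → b ∈ reach u v v g := by
    intro a b ha h
    exact Set.mem_setOf.2 ((Set.mem_setOf.1 ha).trans h.reachable)
  have hmap : ∀ y ∈ reach u v v g, φ y ∈ reach u v u g2 := by
    intro y hy
    obtain ⟨w⟩ := (Set.mem_setOf.1 hy : (gr u v g).Reachable v y)
    have key : y ∈ {z | z ∈ reach u v v g ∧ (gr u v g2).Reachable u (φ z)} := by
      refine walk_subset ?_ w ⟨Set.mem_setOf.2 (SimpleGraph.Reachable.refl v), by rw [hφv]⟩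
      rintro a b ⟨haS, har⟩ h
      exact ⟨hcl a b haS h, har.trans (hadj a b haS h).reachable⟩
    exact key.2
  have : Function.Injective (fun y : reach u v v g => (⟨φ y.1, hmap y.1 y.2⟩ : reach u v u g2)) := by
    rintro ⟨a, ha⟩ ⟨b, hb⟩ h
    simp only [Subtype.mk_eq_mk] at h ⊢
    exact hinj ha hb h
  exact Nat.card_le_card_of_injective _ this
lemma phi_v : phi u v v = u := by simp [phi]

lemma phi_ne_v (huv : u ≠ v) (x : Fin n) : phi u v x ≠ v := by
  unfold phi; split <;> simp_all

lemma phi_injOn {S : Set (Fin n)} (hu : u ∈ S) : Set.InjOn (phi u v) Sᶜ := by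
  intro a ha b hb h
  unfold phi at h
  by_cases hav : a = v <;> by_cases hbv : b = v
  · rw [hav, hbv]
  · rw [if_pos hav, if_neg hbv] at h; exact absurd hu (h ▸ hb)
  · rw [if_neg hav, if_pos hbv] at h; exact absurd hu (h.symm ▸ ha)
  · rwa [if_neg hav, if_neg hbv] at h

/-- coordinates whose edge avoids S -/

lemma map_mem_EI (huv : u ≠ v) {S : Set (Fin n)} (hu : u ∈ S) {e : Sym2 (Fin n)}
    (hd : ¬e.IsDiag) (hA : ∀ x ∈ e, x ∉ S) :
    ¬(Sym2.map (phi u v) e).IsDiag ∧ Sym2.map (phi u v) e ≠ s(u, v) := by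
  induction e with
  | _ x y =>
    rw [Sym2.map_pair_eq]
    constructor
    · rw [Sym2.mk_isDiag_iff]
      intro h
      have hx : x ∈ (Sᶜ : Set (Fin n)) := hA x (Sym2.mem_mk_left _ _)
      have hy : y ∈ (Sᶜ : Set (Fin n)) := hA y (Sym2.mem_mk_right _ _)
      exact hd (Sym2.mk_isDiag_iff.2 (phi_injOn u v hu hx hy h))
    · intro h
      have : v ∈ s(phi u v x, phi u v y) := h ▸ Sym2.mem_mk_right u v
      rw [Sym2.mem_iff] at this
      rcases this with h' | h'
      · exact phi_ne_v u v huv x h'.symm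
      · exact phi_ne_v u v huv y h'.symm

/-- the edge relabeling -/
def fE (S : Set (Fin n)) : EI u v → EI u v := fun e =>
  if h : (e ∈ AS u v S) ∧ u ∈ S ∧ u ≠ v then
    ⟨Sym2.map (phi u v) e.1, map_mem_EI u v h.2.2 h.2.1 e.2.1 h.1⟩
  else e

lemma sym2_map_injOn {S : Set (Fin n)} (hu : u ∈ S) :
    ∀ e : Sym2 (Fin n), (∀ x ∈ e, x ∉ S) → ∀ e' : Sym2 (Fin n), (∀ x ∈ e', x ∉ S) →
      Sym2.map (phi u v) e = Sym2.map (phi u v) e' → e = e' := by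
  intro e he e' he' h
  induction e with
  | _ x y =>
    induction e' with
    | _ x' y' =>
      rw [Sym2.map_pair_eq, Sym2.map_pair_eq, Sym2.eq_iff] at h
      have hx : x ∈ (Sᶜ : Set (Fin n)) := he x (Sym2.mem_mk_left _ _)
      have hy : y ∈ (Sᶜ : Set (Fin n)) := he y (Sym2.mem_mk_right _ _)
      have hx' : x' ∈ (Sᶜ : Set (Fin n)) := he' x' (Sym2.mem_mk_left _ _)
      have hy' : y' ∈ (Sᶜ : Set (Fin n)) := he' y' (Sym2.mem_mk_right _ _)
      have inj := phi_injOn u v (S := S) hu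
      rw [Sym2.eq_iff]
      rcases h with ⟨h1, h2⟩ | ⟨h1, h2⟩
      · exact Or.inl ⟨inj hx hx' h1, inj hy hy' h2⟩
      · exact Or.inr ⟨inj hx hy' h1, inj hy hx' h2⟩

lemma fE_injOn (S : Set (Fin n)) : Set.InjOn (fE u v S) (AS u v S) := by
  intro a ha b hb h
  unfold fE at h
  by_cases hc : u ∈ S ∧ u ≠ v
  · rw [dif_pos ⟨ha, hc⟩, dif_pos ⟨hb, hc⟩] at h
    exact Subtype.ext (sym2_map_injOn u v hc.1 a.1 ha b.1 hb (congrArg Subtype.val h))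
  · have h1 : ¬((a ∈ AS u v S) ∧ u ∈ S ∧ u ≠ v) := fun hh => hc hh.2
    have h2 : ¬((b ∈ AS u v S) ∧ u ∈ S ∧ u ≠ v) := fun hh => hc hh.2
    rwa [dif_neg h1, dif_neg h2] at h

/-- permutation of coordinates extending `fE` on `AS` -/
def sigmaS (S : Set (Fin n)) : EI u v ≃ EI u v :=
  if hn : True then
    (Equiv.Set.sumCompl (AS u v S)).symm.trans
      (((Equiv.Set.imageOfInjOn _ _ (fE_injOn u v S)).sumCongr
        (Fintype.equivOfCardEq (by
          have h1 : Fintype.card (fE u v S '' AS u v S) = Fintype.card (AS u v S) :=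
            (Fintype.card_congr (Equiv.Set.imageOfInjOn _ _ (fE_injOn u v S))).symm
          rw [Fintype.card_compl_set, Fintype.card_compl_set, h1]))).trans
      (Equiv.Set.sumCompl (fE u v S '' AS u v S)))
  else Equiv.refl _

lemma sigmaS_apply {S : Set (Fin n)} {e : EI u v} (he : e ∈ AS u v S) :
    sigmaS u v S e = fE u v S e := by
  rw [sigmaS, dif_pos trivial]
  simp only [Equiv.trans_apply]
  rw [Equiv.Set.sumCompl_symm_apply_of_mem he]
  rfl
lemma bw_nonneg (h0 : 0 ≤ θ) (h1 : θ ≤ 1) (b : Bool) : 0 ≤ bw θ b := by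
  cases b <;> simp [bw] <;> linarith

lemma W_nonneg (h0 : 0 ≤ θ) (h1 : θ ≤ 1) (g : EI u v → Bool) : 0 ≤ W u v θ g :=
  Finset.prod_nonneg fun e _ => bw_nonneg θ h0 h1 (g e)

lemma W_sum : ∑ g : EI u v → Bool, W u v θ g = 1 := by
  have := Finset.prod_univ_sum (fun _ : EI u v => (Finset.univ : Finset Bool))
    (fun _ b => bw θ b)
  rw [Fintype.piFinset_univ] at this
  unfold W
  rw [← this]
  have h1 : ∀ _e : EI u v, ∑ b : Bool, bw θ b = 1 := by
    intro e; rw [Fintype.sum_bool]; simp [bw]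
  calc ∏ e : EI u v, ∑ b : Bool, bw θ b = ∏ _e : EI u v, (1:ℝ) := by
        exact Finset.prod_congr rfl fun e _ => h1 e
    _ = 1 := Finset.prod_const_one

def g1of (S : Set (Fin n)) (g g' : EI u v → Bool) : EI u v → Bool :=
  fun e => if e ∈ AS u v S then g' e else g e

def g2of (S : Set (Fin n)) (g g' : EI u v → Bool) : EI u v → Bool :=
  fun e => if (sigmaS u v S).symm e ∈ AS u v S then g ((sigmaS u v S).symm e)
           else g' ((sigmaS u v S).symm e)

lemma W_mul_W (S : Set (Fin n)) (g g' : EI u v → Bool) :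
    W u v θ (g1of u v S g g') * W u v θ (g2of u v S g g') = W u v θ g * W u v θ g' := by
  have h2 : W u v θ (g2of u v S g g')
      = ∏ e, bw θ (if e ∈ AS u v S then g e else g' e) := by
    unfold W g2of
    exact Equiv.prod_comp (sigmaS u v S).symm
      (fun e => bw θ (if e ∈ AS u v S then g e else g' e))
  rw [h2]
  unfold W g1of
  rw [← Finset.prod_mul_distrib, ← Finset.prod_mul_distrib]
  refine Finset.prod_congr rfl fun e _ => ?_
  by_cases he : e ∈ AS u v S
  · rw [if_pos he, if_pos he, mul_comm]
  · rw [if_neg he, if_neg he]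

lemma recover1 (S : Set (Fin n)) (g g' : EI u v → Bool) (e : EI u v) :
    g e = if e ∈ AS u v S then g2of u v S g g' (sigmaS u v S e) else g1of u v S g g' e := by
  by_cases he : e ∈ AS u v S <;> simp [g1of, g2of, he, Equiv.symm_apply_apply]

lemma recover2 (S : Set (Fin n)) (g g' : EI u v → Bool) (e : EI u v) :
    g' e = if e ∈ AS u v S then g1of u v S g g' e else g2of u v S g g' (sigmaS u v S e) := by
  by_cases he : e ∈ AS u v S <;> simp [g1of, g2of, he, Equiv.symm_apply_apply]

lemma reach_g1of (g g' : EI u v → Bool) :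
    reach u v u (g1of u v (reach u v u g) g g') = reach u v u g := by
  apply reach_eq_of_agree
  rintro e ⟨x, hxe, hxS⟩
  unfold g1of
  rw [if_neg]
  intro hA; exact hA x hxe hxS

lemma reach_v_subset {g : EI u v → Bool} (hv : v ∉ reach u v u g) :
    reach u v v g ⊆ (reach u v u g)ᶜ := by
  intro x hx hx'
  exact hv (Set.mem_setOf.2 ((Set.mem_setOf.1 hx' :
    (gr u v g).Reachable u x).trans (Set.mem_setOf.1 hx : (gr u v g).Reachable v x).symm))

lemma card_g2of (huv : u ≠ v) {g : EI u v → Bool} (g' : EI u v → Bool)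
    (hv : v ∉ reach u v u g) :
    Nat.card (reach u v v g)
      ≤ Nat.card (reach u v u (g2of u v (reach u v u g) g g')) := by
  set S := reach u v u g with hSdef
  have hu : u ∈ S := Set.mem_setOf.2 (SimpleGraph.Reachable.refl u)
  have hsub := reach_v_subset u v hv
  refine card_reach_le u v (phi u v) (phi_v u v) ((phi_injOn u v hu).mono hsub) ?_
  intro x y hx hadj
  have hy : y ∈ reach u v v g :=
    Set.mem_setOf.2 ((Set.mem_setOf.1 hx : (gr u v g).Reachable v x).trans hadj.reachable)
  obtain ⟨h, hg⟩ := (gr_adj u v).1 hadj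
  have heA : (⟨s(x,y), h⟩ : EI u v) ∈ AS u v S := by
    intro z hz
    rw [Sym2.mem_iff] at hz
    rcases hz with rfl | rfl
    · exact hsub hx
    · exact hsub hy
  have hσ := sigmaS_apply u v heA
  have hval : (sigmaS u v S ⟨s(x,y), h⟩).1 = s(phi u v x, phi u v y) := by
    rw [hσ]
    unfold fE
    rw [dif_pos ⟨heA, hu, huv⟩]
    exact Sym2.map_pair_eq _ _ _
  rw [gr_adj]
  refine ⟨hval ▸ (sigmaS u v S ⟨s(x,y), h⟩).2, ?_⟩
  have helt : (⟨s(phi u v x, phi u v y), hval ▸ (sigmaS u v S ⟨s(x,y), h⟩).2⟩ : EI u v)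
      = sigmaS u v S ⟨s(x,y), h⟩ := Subtype.ext hval.symm
  rw [helt]
  unfold g2of
  rw [Equiv.symm_apply_apply, if_pos heA]
  exact hg

def Phi : ((EI u v → Bool) × (EI u v → Bool)) → ((EI u v → Bool) × (EI u v → Bool)) :=
  fun p => (g1of u v (reach u v u p.1) p.1 p.2, g2of u v (reach u v u p.1) p.1 p.2)

lemma Phi_injOn {p q : ((EI u v → Bool) × (EI u v → Bool))}
    (hp : v ∉ reach u v u p.1) (hq : v ∉ reach u v u q.1)
    (heq : Phi u v p = Phi u v q) : p = q := by
  have hS : reach u v u p.1 = reach u v u q.1 := by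
    have h1 := reach_g1of u v p.1 p.2
    have h2 := reach_g1of u v q.1 q.2
    rw [← h1, ← h2]
    exact congrArg (fun g => reach u v u g) (congrArg Prod.fst heq)
  set S := reach u v u p.1 with hSdef
  have hg1 : g1of u v S p.1 p.2 = g1of u v S q.1 q.2 := by
    have := congrArg Prod.fst heq
    simpa [Phi, ← hSdef, ← hS] using this
  have hg2 : g2of u v S p.1 p.2 = g2of u v S q.1 q.2 := by
    have := congrArg Prod.snd heq
    simpa [Phi, ← hSdef, ← hS] using this
  have h1 : p.1 = q.1 := by
    funext e
    rw [recover1 u v S p.1 p.2 e, recover1 u v S q.1 q.2 e, hg1, hg2]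
  have h2 : p.2 = q.2 := by
    funext e
    rw [recover2 u v S p.1 p.2 e, recover2 u v S q.1 q.2 e, hg1, hg2]
  exact Prod.ext h1 h2

theorem comb_main (huv : u ≠ v) (h0 : 0 ≤ θ) (h1 : θ ≤ 1) :
    ∑ g : EI u v → Bool, W u v θ g *
      (if reach u v u g = reach u v v g then (0:ℝ)
       else (Nat.card (reach u v u g) : ℝ)^2 * (Nat.card (reach u v v g) : ℝ)^2)
    ≤ (∑ g : EI u v → Bool, W u v θ g * (Nat.card (reach u v u g) : ℝ)^2)^2 := by
  have Wnn : ∀ g, 0 ≤ W u v θ g := W_nonneg u v θ h0 h1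
  set N : (EI u v → Bool) → ℝ := fun g => (Nat.card (reach u v u g) : ℝ)^2 with hN
  set M : (EI u v → Bool) → ℝ := fun g => (Nat.card (reach u v v g) : ℝ)^2 with hM
  set L : (EI u v → Bool) → ℝ := fun g =>
    if reach u v u g = reach u v v g then (0:ℝ) else N g * M g with hL
  set lhsF : ((EI u v → Bool) × (EI u v → Bool)) → ℝ :=
    fun p => W u v θ p.1 * L p.1 * W u v θ p.2 with hlhsF
  set rhsF : ((EI u v → Bool) × (EI u v → Bool)) → ℝ :=
    fun p => (W u v θ p.1 * N p.1) * (W u v θ p.2 * N p.2) with hrhsF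
  have Nnn : ∀ g, 0 ≤ N g := fun g => sq_nonneg _
  have rhsFnn : ∀ p, 0 ≤ rhsF p := fun p =>
    mul_nonneg (mul_nonneg (Wnn _) (Nnn _)) (mul_nonneg (Wnn _) (Nnn _))
  have e1 : ∑ g : EI u v → Bool, W u v θ g * L g
      = ∑ p : ((EI u v → Bool) × (EI u v → Bool)), lhsF p := by
    rw [Fintype.sum_prod_type]
    calc ∑ g : EI u v → Bool, W u v θ g * L g
        = ∑ g : EI u v → Bool, (W u v θ g * L g) * ∑ g' : EI u v → Bool, W u v θ g' := by
          rw [W_sum]; simp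
      _ = ∑ g : EI u v → Bool, ∑ g' : EI u v → Bool, lhsF (g, g') := by
          refine Finset.sum_congr rfl fun g _ => ?_
          rw [Finset.mul_sum]
  have e2 : (∑ g : EI u v → Bool, W u v θ g * N g)^2
      = ∑ p : ((EI u v → Bool) × (EI u v → Bool)), rhsF p := by
    rw [sq, Finset.sum_mul_sum, Fintype.sum_prod_type]
  set D : Finset ((EI u v → Bool) × (EI u v → Bool)) :=
    Finset.univ.filter (fun p => v ∉ reach u v u p.1) with hD
  have hL0 : ∀ g, v ∈ reach u v u g → L g = 0 := by
    intro g hg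
    have hg' : (gr u v g).Reachable u v := Set.mem_setOf.1 hg
    have : reach u v u g = reach u v v g := by
      ext y
      exact ⟨fun hy => Set.mem_setOf.2 (hg'.symm.trans (Set.mem_setOf.1 hy)),
             fun hy => Set.mem_setOf.2 (hg'.trans (Set.mem_setOf.1 hy))⟩
    rw [hL]; simp [this]
  have e3 : ∑ p : ((EI u v → Bool) × (EI u v → Bool)), lhsF p = ∑ p ∈ D, lhsF p := by
    refine (Finset.sum_subset (Finset.subset_univ D) ?_).symm
    intro p _ hp
    have hv : v ∈ reach u v u p.1 := by
      by_contra hvv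
      exact hp (Finset.mem_filter.2 ⟨Finset.mem_univ p, hvv⟩)
    rw [hlhsF]
    simp only [hL0 p.1 hv]
    ring
  have step : ∀ p ∈ D, lhsF p ≤ rhsF (Phi u v p) := by
    intro p hp
    have hv : v ∉ reach u v u p.1 := (Finset.mem_filter.1 hp).2
    have hRu : reach u v u (Phi u v p).1 = reach u v u p.1 := reach_g1of u v p.1 p.2
    have hNeq : N (Phi u v p).1 = N p.1 := by rw [hN]; simp only [hRu]
    have hMle : M p.1 ≤ N (Phi u v p).2 := by
      have hc := card_g2of u v huv p.2 hv
      exact pow_le_pow_left₀ (Nat.cast_nonneg _) (Nat.cast_le.2 hc) 2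
    have hW : W u v θ (Phi u v p).1 * W u v θ (Phi u v p).2 = W u v θ p.1 * W u v θ p.2 :=
      W_mul_W u v θ _ p.1 p.2
    have hLval : L p.1 = N p.1 * M p.1 := by
      rw [hL]
      refine if_neg fun h => hv ?_
      exact h.symm ▸ (Set.mem_setOf.2 (SimpleGraph.Reachable.refl v))
    calc lhsF p = (W u v θ p.1 * W u v θ p.2) * (N p.1 * M p.1) := by
          rw [hlhsF]; simp only [hLval]; ring
      _ ≤ (W u v θ p.1 * W u v θ p.2) * (N p.1 * N (Phi u v p).2) := by
          refine mul_le_mul_of_nonneg_left ?_ (mul_nonneg (Wnn _) (Wnn _))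
          exact mul_le_mul_of_nonneg_left hMle (Nnn _)
      _ = rhsF (Phi u v p) := by rw [hrhsF]; simp only [← hW, hNeq]; ring
  have e4 : ∑ p ∈ D, rhsF (Phi u v p) = ∑ q ∈ D.image (Phi u v), rhsF q := by
    refine (Finset.sum_image ?_).symm
    intro p hp q hq h
    exact Phi_injOn u v (Finset.mem_filter.1 hp).2 (Finset.mem_filter.1 hq).2 h
  have e5 : ∑ q ∈ D.image (Phi u v), rhsF q
      ≤ ∑ q : ((EI u v → Bool) × (EI u v → Bool)), rhsF q :=
    Finset.sum_le_sum_of_subset_of_nonneg (Finset.subset_univ _) fun q _ _ => rhsFnn q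
  calc ∑ g : EI u v → Bool, W u v θ g *
      (if reach u v u g = reach u v v g then (0:ℝ)
       else (Nat.card (reach u v u g) : ℝ)^2 * (Nat.card (reach u v v g) : ℝ)^2)
      = ∑ p ∈ D, lhsF p := by rw [← e3, ← e1]
    _ ≤ ∑ p ∈ D, rhsF (Phi u v p) := Finset.sum_le_sum step
    _ = ∑ q ∈ D.image (Phi u v), rhsF q := e4
    _ ≤ ∑ q : ((EI u v → Bool) × (EI u v → Bool)), rhsF q := e5
    _ = (∑ g : EI u v → Bool, W u v θ g * N g)^2 := e2.symm


variable {Ω : Type} [MeasureSpace Ω]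


def atom {n : ℕ} (u v : Fin n) (A : Sym2 (Fin n) → Set Ω) (g : EI u v → Bool) : Set Ω :=
  ⋂ (e : EI u v), (if g e then A e.1 else (A e.1)ᶜ)

lemma mem_atom_iff {n : ℕ} {u v : Fin n} {A : Sym2 (Fin n) → Set Ω} {g : EI u v → Bool}
    {ω : Ω} : ω ∈ atom u v A g ↔ (fun e : EI u v => decide (ω ∈ A e.1)) = g := by
  simp only [atom, Set.mem_iInter, funext_iff]
  constructor
  · intro h e
    have he := h e
    cases hge : g e
    · rw [hge] at he
      simp only [Bool.false_eq_true, if_false, Set.mem_compl_iff] at he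
      exact decide_eq_false he
    · rw [hge] at he
      simp only [if_true] at he
      exact decide_eq_true he
  · intro h e
    have he := h e
    cases hge : g e
    · rw [hge] at he
      simp only [Bool.false_eq_true, if_false, Set.mem_compl_iff]
      exact of_decide_eq_false he
    · rw [hge] at he
      simp only [if_true]
      exact of_decide_eq_true he

lemma measurable_atom {n : ℕ} {u v : Fin n} {A : Sym2 (Fin n) → Set Ω}
    (hmeas : ∀ e, MeasurableSet (A e)) (g : EI u v → Bool) :
    MeasurableSet (atom u v A g) := by
  refine MeasurableSet.iInter fun e => ?_
  cases hge : g e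
  · simpa using (hmeas e.1).compl
  · simpa using hmeas e.1

lemma integral_comp_X [IsProbabilityMeasure (ℙ : Measure Ω)]
    {n : ℕ} (u v : Fin n) (A : Sym2 (Fin n) → Set Ω)
    (hmeas : ∀ e, MeasurableSet (A e)) (F : (EI u v → Bool) → ℝ) :
    ∫ ω, F (fun e : EI u v => decide (ω ∈ A e.1)) ∂ℙ
      = ∑ g : EI u v → Bool, (ℙ (atom u v A g)).toReal * F g := by
  have hpt : ∀ ω : Ω, F (fun e : EI u v => decide (ω ∈ A e.1))
      = ∑ g : EI u v → Bool, Set.indicator (atom u v A g) (fun _ => F g) ω := by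
    intro ω
    rw [Finset.sum_eq_single (fun e : EI u v => decide (ω ∈ A e.1))]
    · rw [Set.indicator_of_mem (mem_atom_iff.2 rfl)]
    · intro g _ hg
      rw [Set.indicator_of_notMem]
      intro hmem
      exact hg (mem_atom_iff.1 hmem).symm
    · intro h; exact absurd (Finset.mem_univ _) h
  calc ∫ ω, F (fun e : EI u v => decide (ω ∈ A e.1)) ∂ℙ
      = ∫ ω, ∑ g : EI u v → Bool, Set.indicator (atom u v A g) (fun _ => F g) ω ∂ℙ := by
        exact integral_congr_ae (Filter.Eventually.of_forall hpt)
    _ = ∑ g : EI u v → Bool, ∫ ω, Set.indicator (atom u v A g) (fun _ => F g) ω ∂ℙ := by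
        refine integral_finset_sum _ fun g _ => ?_
        exact (integrable_const (F g)).indicator (measurable_atom hmeas g)
    _ = ∑ g : EI u v → Bool, (ℙ (atom u v A g)).toReal * F g := by
        refine Finset.sum_congr rfl fun g _ => ?_
        rw [integral_indicator_const (F g) (measurable_atom hmeas g), smul_eq_mul]; rfl

lemma atom_prob [IsProbabilityMeasure (ℙ : Measure Ω)]
    {n : ℕ} (u v : Fin n) (θ : ℝ) (hθ0 : 0 ≤ θ) (hθ1 : θ ≤ 1)
    (A : Sym2 (Fin n) → Set Ω)
    (hmeas : ∀ e, MeasurableSet (A e))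
    (hindep : iIndepSet (fun e : EI u v => A e.1) ℙ)
    (hAθ : ∀ e : Sym2 (Fin n), ¬e.IsDiag → e ≠ s(u, v) → (ℙ (A e)).toReal = θ)
    (g : EI u v → Bool) :
    (ℙ (atom u v A g)).toReal = W u v θ g := by
  have hmeas' : ∀ e : EI u v, e ∈ (Finset.univ : Finset (EI u v)) →
      MeasurableSet[MeasurableSpace.generateFrom {A e.1}]
        (if g e then A e.1 else (A e.1)ᶜ) := by
    intro e _
    cases hge : g e
    · simpa using (MeasurableSpace.measurableSet_generateFrom
        (Set.mem_singleton (A e.1))).compl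
    · simpa using MeasurableSpace.measurableSet_generateFrom
        (Set.mem_singleton (A e.1))
  have hkey := ((iIndepSet_iff (fun e : EI u v => A e.1) ℙ).1 hindep) Finset.univ hmeas'
  have hatom : atom u v A g = ⋂ e ∈ (Finset.univ : Finset (EI u v)),
      (if g e then A e.1 else (A e.1)ᶜ) := by
    rw [atom]
    simp
  rw [hatom, hkey, ENNReal.toReal_prod]
  refine Finset.prod_congr rfl fun e _ => ?_
  cases hge : g e
  · simp only [Bool.false_eq_true, if_false]
    rw [measure_compl (hmeas e.1) (measure_ne_top ℙ _)]
    rw [measure_univ]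
    rw [ENNReal.toReal_sub_of_le prob_le_one ENNReal.one_ne_top]
    rw [ENNReal.toReal_one, hAθ e.1 e.2.1 e.2.2]
    simp [bw]
  · simp only [if_true]
    rw [hAθ e.1 e.2.1 e.2.2]
    simp [bw]


lemma gr_eq {Ω : Type} {n : ℕ} (u v : Fin n) (A : Sym2 (Fin n) → Set Ω) (ω : Ω) :
    SimpleGraph.fromEdgeSet ({e | ω ∈ A e} \ {s(u, v)})
      = gr u v (fun e : EI u v => decide (ω ∈ A e.1)) := by
  ext x y
  rw [SimpleGraph.fromEdgeSet_adj, gr_adj]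
  constructor
  · rintro ⟨⟨hmem, hne⟩, hxy⟩
    have hd : ¬(s(x,y)).IsDiag := fun h => hxy (Sym2.mk_isDiag_iff.1 h)
    exact ⟨⟨hd, fun h => hne (Set.mem_singleton_iff.2 h)⟩, decide_eq_true hmem⟩
  · rintro ⟨⟨hd, hne⟩, hg⟩
    exact ⟨⟨of_decide_eq_true hg, fun h => hne (Set.mem_singleton_iff.1 h)⟩,
      fun h => hd (Sym2.mk_isDiag_iff.2 h)⟩

end
end CompCorr
end MSTNoise

namespace MSTNoise

open scoped Classical in
/-- **Correlation inequality for component sizes in an Erdős–Rényi graph with one edge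
removed** (inequality (Y2a)). In a random graph where every possible edge other than
`{u,v}` appears independently with probability `θ`,
`E[1_{C(u) ≠ C(v)} |C(u)|² |C(v)|²] ≤ (E[|C(u)|²])²`. -/
theorem component_size_correlation
    (n : ℕ) (hn : 2 ≤ n) (θ : ℝ) (hθ : θ ∈ Set.Icc (0 : ℝ) 1)
    (u v : Fin n) (huv : u ≠ v)
    (Ω : Type) (mΩ : MeasureSpace Ω) (hprob : IsProbabilityMeasure (ℙ : Measure Ω))
    (A : Sym2 (Fin n) → Set Ω)
    (hmeas : ∀ e, MeasurableSet (A e))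
    (hindep : iIndepSet
      (fun e : {e : Sym2 (Fin n) // ¬e.IsDiag ∧ e ≠ s(u, v)} => A e.1) ℙ)
    (hAθ : ∀ e : Sym2 (Fin n), ¬e.IsDiag → e ≠ s(u, v) → (ℙ (A e)).toReal = θ) :
    (∫ ω, (if {y | (SimpleGraph.fromEdgeSet ({e | ω ∈ A e} \ {s(u, v)})).Reachable u y} =
           {y | (SimpleGraph.fromEdgeSet ({e | ω ∈ A e} \ {s(u, v)})).Reachable v y}
        then (0 : ℝ)
        else
          (Nat.card {y | (SimpleGraph.fromEdgeSet ({e | ω ∈ A e} \ {s(u, v)})).Reachable u y} : ℝ) ^ 2 *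
          (Nat.card {y | (SimpleGraph.fromEdgeSet ({e | ω ∈ A e} \ {s(u, v)})).Reachable v y} : ℝ) ^ 2) ∂ℙ)
      ≤ (∫ ω,
          (Nat.card {y | (SimpleGraph.fromEdgeSet ({e | ω ∈ A e} \ {s(u, v)})).Reachable u y} : ℝ) ^ 2 ∂ℙ) ^ 2 := by
  haveI := hprob
  obtain ⟨hθ0, hθ1⟩ := hθ
  set X : Ω → (CompCorr.EI u v → Bool) := fun ω (e : CompCorr.EI u v) => decide (ω ∈ A e.1)
    with hX
  set F : (CompCorr.EI u v → Bool) → ℝ := fun g =>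
    if CompCorr.reach u v u g = CompCorr.reach u v v g then (0:ℝ)
    else (Nat.card (CompCorr.reach u v u g) : ℝ)^2 *
      (Nat.card (CompCorr.reach u v v g) : ℝ)^2 with hF
  set G : (CompCorr.EI u v → Bool) → ℝ := fun g =>
    (Nat.card (CompCorr.reach u v u g) : ℝ)^2 with hG
  have hW : ∀ g : CompCorr.EI u v → Bool,
      (ℙ (CompCorr.atom u v A g)).toReal = CompCorr.W u v θ g :=
    CompCorr.atom_prob u v θ hθ0 hθ1 A hmeas hindep hAθ
  have h1 : ∫ ω, F (X ω) ∂ℙ = ∑ g : CompCorr.EI u v → Bool, CompCorr.W u v θ g * F g := by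
    rw [CompCorr.integral_comp_X u v A hmeas F]
    exact Finset.sum_congr rfl fun g _ => by rw [hW g]
  have h2 : ∫ ω, G (X ω) ∂ℙ = ∑ g : CompCorr.EI u v → Bool, CompCorr.W u v θ g * G g := by
    rw [CompCorr.integral_comp_X u v A hmeas G]
    exact Finset.sum_congr rfl fun g _ => by rw [hW g]
  have hle : ∫ ω, F (X ω) ∂ℙ ≤ (∫ ω, G (X ω) ∂ℙ)^2 := by
    rw [h1, h2]
    exact CompCorr.comb_main u v θ huv hθ0 hθ1
  simp only [CompCorr.gr_eq u v A]
  exact hle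

end MSTNoise
end
end

section
/- Conditional independence of the two cycle-breaking runs in the coupling of Lemma 3.3. Fix n, λ and ε ∈ (0,1), and assume p = p(n,λ) ∈ [0,1]. Let 𝕁 = Conn(G_{n,λ}) ∩ Conn(G^ε_{n,λ}) and define modified weights w̃ on the edges of G^ε_{n,λ} by w̃_e = p·w''_e if e ∈ Ǐ ∩ 𝕁 and w̃_e = w^ε_e otherwise, where (w''_e)_{e∈E_n} are fresh i.i.d. uniform [0,1] variables independent of everything else. Then, conditionally on the triple of random edge sets (G_{n,λ}, G^ε_{n,λ}, Ǐ), the random edge sets 𝔽_{n,λ} = MSF(G_{n,λ}, w) and 𝔽^ε_{n,λ} = MSF(G^ε_{n,λ}, w̃) are conditionally independent. -/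
open MeasureTheory ProbabilityTheory Filter SimpleGraph

noncomputable section

namespace MSTNoise

section AuxLemmas

lemma ConnE_subset {V : Type*} (G : SimpleGraph V) : ConnE G ⊆ G.edgeSet := by
  rintro e ⟨x, c, hc, he⟩
  exact c.edges_subset_edgeSet he

lemma reach_conn {V : Type*} {G : SimpleGraph V} {x y : V} (hxy : G.Adj x y)
    {s : Set (Sym2 V)} (hs : s ⊆ G.edgeSet) (hne : s(x,y) ∉ s)
    (h : (SimpleGraph.fromEdgeSet s).Reachable x y) :
    s(x,y) ∈ ConnE G ∧ (SimpleGraph.fromEdgeSet (s ∩ ConnE G)).Reachable x y := by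
  classical
  obtain ⟨W⟩ := h
  set Q : (SimpleGraph.fromEdgeSet s).Walk x y := W.toPath.1 with hQdef
  have hQp : Q.IsPath := W.toPath.2
  have hQe : ∀ f ∈ Q.edges, f ∈ s ∧ ¬ f.IsDiag := by
    intro f hf
    have h2 := Q.edges_subset_edgeSet hf
    rw [SimpleGraph.edgeSet_fromEdgeSet] at h2
    exact ⟨h2.1, h2.2⟩
  have hGe : ∀ f ∈ Q.edges, f ∈ G.edgeSet := fun f hf => hs (hQe f hf).1
  set QG : G.Walk x y := Q.transfer G hGe with hQG
  have hQGp : QG.IsPath := hQp.transfer hGe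
  have hQGe : QG.edges = Q.edges := Q.edges_transfer hGe
  have hxyQ : s(y, x) ∉ QG.edges := by
    rw [hQGe, Sym2.eq_swap]
    intro hmem
    exact hne (hQe _ hmem).1
  have hcyc : (SimpleGraph.Walk.cons hxy.symm (⟨QG, hQGp⟩ : G.Path x y).1).IsCycle :=
    SimpleGraph.Path.cons_isCycle ⟨QG, hQGp⟩ hxy.symm hxyQ
  set c : G.Walk y y := SimpleGraph.Walk.cons hxy.symm QG with hc
  have hmemc : ∀ f, f ∈ QG.edges ∨ f = s(y,x) → f ∈ c.edges := by
    intro f hf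
    rw [hc, SimpleGraph.Walk.edges_cons]
    rcases hf with hf | hf
    · exact List.mem_cons_of_mem _ hf
    · rw [hf]; exact List.mem_cons_self
  have hconn : ∀ f, f ∈ QG.edges ∨ f = s(y,x) → f ∈ ConnE G := by
    intro f hf
    exact ⟨y, c, hcyc, hmemc f hf⟩
  constructor
  · rw [Sym2.eq_swap]
    exact hconn _ (Or.inr rfl)
  · refine ⟨Q.transfer _ ?_⟩
    intro f hf
    rw [SimpleGraph.edgeSet_fromEdgeSet]
    refine ⟨⟨(hQe f hf).1, hconn f (Or.inl ?_)⟩, (hQe f hf).2⟩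
    rw [hQGe]; exact hf

lemma MSF_subset_of_eqOn {V : Type*} {G : SimpleGraph V} {u u' : Sym2 V → ℝ}
    (h : ∀ e ∈ ConnE G, u e = u' e) : MSF G u ⊆ MSF G u' := by
  rintro e ⟨heE, hcond⟩
  refine ⟨heE, ?_⟩
  intro x y hexy hreach
  have hadj : G.Adj x y := by rw [hexy] at heE; exact heE
  have hne : s(x,y) ∉ {f | f ∈ G.edgeSet ∧ u' f < u' e} := by
    rintro ⟨-, hlt⟩
    rw [hexy] at hlt
    exact lt_irrefl _ hlt
  obtain ⟨hconn, hreach'⟩ := reach_conn hadj (fun f hf => hf.1) hne hreach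
  rw [← hexy] at hconn
  refine hcond x y hexy (hreach'.mono (SimpleGraph.fromEdgeSet_mono ?_))
  rintro f ⟨⟨hfE, hflt⟩, hfconn⟩
  exact ⟨hfE, by rw [h f hfconn, h e hconn]; exact hflt⟩

lemma MSF_congr {V : Type*} {G : SimpleGraph V} {u u' : Sym2 V → ℝ}
    (h : ∀ e ∈ ConnE G, u e = u' e) : MSF G u = MSF G u' :=
  Set.Subset.antisymm (MSF_subset_of_eqOn h)
    (MSF_subset_of_eqOn (fun e he => (h e he).symm))

/-- Auxiliary: MSF with an explicit comparison pattern. -/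
def MSFpat {V : Type*} (G : SimpleGraph V) (S : Sym2 V → Set (Sym2 V)) : Set (Sym2 V) :=
  {e | e ∈ G.edgeSet ∧ ∀ x y : V, e = s(x, y) →
      ¬ (SimpleGraph.fromEdgeSet (S e)).Reachable x y}

lemma measurable_MSF {V : Type*} [Finite V] (G : SimpleGraph V) :
    @Measurable (Sym2 V → ℝ) (Set (Sym2 V)) _ ⊤ (fun t => MSF G t) := by
  classical
  refine @measurable_to_countable' (Set (Sym2 V)) (Sym2 V → ℝ) ⊤ ?_ _ _ ?_
  · infer_instance
  intro F
  have hrw : (fun t : Sym2 V → ℝ => MSF G t) ⁻¹' {F} =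
      ⋃ (S : Sym2 V → Set (Sym2 V)) (_ : MSFpat G S = F),
        {t : Sym2 V → ℝ | ∀ e f, (f ∈ G.edgeSet ∧ t f < t e) ↔ f ∈ S e} := by
    ext t
    simp only [Set.mem_preimage, Set.mem_singleton_iff, Set.mem_iUnion, Set.mem_setOf_eq]
    constructor
    · intro ht
      exact ⟨fun e => {f | f ∈ G.edgeSet ∧ t f < t e}, ht, fun e f => Iff.rfl⟩
    · rintro ⟨S, hS, hpat⟩
      rw [← hS]
      have hfe : (fun e => {f | f ∈ G.edgeSet ∧ t f < t e}) = S := by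
        funext e; ext f; exact hpat e f
      show MSFpat G _ = MSFpat G S
      rw [hfe]
  rw [hrw]
  apply MeasurableSet.iUnion
  intro S
  apply MeasurableSet.iUnion
  intro _
  have hrw2 : {t : Sym2 V → ℝ | ∀ e f, (f ∈ G.edgeSet ∧ t f < t e) ↔ f ∈ S e} =
      ⋂ (e) (f), {t : Sym2 V → ℝ | (f ∈ G.edgeSet ∧ t f < t e) ↔ f ∈ S e} := by
    ext t; simp only [Set.mem_iInter, Set.mem_setOf_eq]
  rw [hrw2]
  refine MeasurableSet.iInter fun e => MeasurableSet.iInter fun f => ?_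
  by_cases hfE : f ∈ G.edgeSet <;> by_cases hfS : f ∈ S e
  · have h : {t : Sym2 V → ℝ | (f ∈ G.edgeSet ∧ t f < t e) ↔ f ∈ S e} = {t | t f < t e} := by
      ext t; simp [hfE, hfS]
    rw [h]; exact measurableSet_lt (measurable_pi_apply f) (measurable_pi_apply e)
  · have h : {t : Sym2 V → ℝ | (f ∈ G.edgeSet ∧ t f < t e) ↔ f ∈ S e} = {t | t f < t e}ᶜ := by
      ext t; simp [hfE, hfS]
    rw [h]
    exact (measurableSet_lt (measurable_pi_apply f) (measurable_pi_apply e)).compl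
  · have h : {t : Sym2 V → ℝ | (f ∈ G.edgeSet ∧ t f < t e) ↔ f ∈ S e} = ∅ := by
      ext t; simp [hfE, hfS]
    rw [h]; exact MeasurableSet.empty
  · have h : {t : Sym2 V → ℝ | (f ∈ G.edgeSet ∧ t f < t e) ↔ f ∈ S e} = Set.univ := by
      ext t; simp [hfE, hfS]
    rw [h]; exact MeasurableSet.univ

lemma measurableSet_iff_const {α : Type*} [MeasurableSpace α] {P : α → Prop}
    (hP : MeasurableSet {v | P v}) (c : Prop) : MeasurableSet {v | P v ↔ c} := by
  by_cases hc : c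
  · have h : {v | P v ↔ c} = {v | P v} := by ext v; simp [hc]
    rw [h]; exact hP
  · have h : {v | P v ↔ c} = {v | P v}ᶜ := by ext v; simp [hc]
    rw [h]; exact hP.compl

lemma mem_fromEdgeSet_iff {V : Type*} (s : Set (Sym2 V)) (e : Sym2 V) :
    e ∈ (SimpleGraph.fromEdgeSet s).edgeSet ↔ e ∈ s ∧ ¬ e.IsDiag := by
  rw [SimpleGraph.edgeSet_fromEdgeSet]
  exact Iff.rfl

lemma iIndepFun_congr_ae {Ω ι : Type*} [MeasurableSpace Ω] {μ : Measure Ω} {β : ι → Type*}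
    {m : ∀ i, MeasurableSpace (β i)} {f g : ∀ i, Ω → β i}
    (hf : iIndepFun (m := m) f μ) (h : ∀ i, f i =ᵐ[μ] g i) : iIndepFun (m := m) g μ := by
  rw [iIndepFun_iff_measure_inter_preimage_eq_mul] at hf ⊢
  intro S sets hsets
  have key : ∀ i ∈ S, μ (g i ⁻¹' sets i) = μ (f i ⁻¹' sets i) := by
    intro i _
    apply measure_congr
    rw [Filter.eventuallyEq_set]
    filter_upwards [h i] with ω hω
    simp [Set.mem_preimage, hω]
  have h1 : μ (⋂ i ∈ S, g i ⁻¹' sets i) = μ (⋂ i ∈ S, f i ⁻¹' sets i) := by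
    apply measure_congr
    rw [Filter.eventuallyEq_set]
    have hae : ∀ᵐ ω ∂μ, ∀ i ∈ (S : Set ι), f i ω = g i ω :=
      (ae_ball_iff S.countable_toSet).2 (fun i _ => h i)
    filter_upwards [hae] with ω hω'
    have hω : ∀ i ∈ S, f i ω = g i ω := fun i hi => hω' i (Finset.mem_coe.mpr hi)
    simp only [Set.mem_iInter, Set.mem_preimage]
    constructor <;> intro hh i hi
    · exact (hω i hi) ▸ (hh i hi)
    · exact (hω i hi) ▸ (hh i hi)
  rw [h1, hf S hsets]
  exact (Finset.prod_congr rfl key).symm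

lemma edge_iff {p W Wp B : ℝ} {d m1 m2 m3 c : Prop} [Decidable c] (hp0 : 0 ≤ p)
    (hcm : c → (m1 ∧ d)) :
    ((((W ≤ p ∧ d) ↔ m1) ∧ (((if B = 0 then W else Wp) ≤ p ∧ d) ↔ m2) ∧
      (((W ≤ p ∧ (if B = 0 then W else Wp) ≤ p ∧ B = 0) ∧ d) ↔ m3)))
    ↔ ((c → W ≤ p) ∧
      (((if c then (0:ℝ) else W) ≤ p ∧ d) ↔ m1) ∧
      (((if B = 0 then (if c then (0:ℝ) else W) else Wp) ≤ p ∧ d) ↔ m2) ∧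
      ((((if c then (0:ℝ) else W) ≤ p ∧ (if B = 0 then (if c then (0:ℝ) else W) else Wp) ≤ p ∧ B = 0) ∧ d) ↔ m3)) := by
  by_cases hc : c
  · obtain ⟨hm1, hd⟩ := hcm hc
    by_cases hB : B = 0 <;> simp [hc, hB, hp0, hd, hm1] <;> tauto
  · by_cases hB : B = 0 <;> simp [hc, hB] <;> tauto

end AuxLemmas



open scoped Classical in
/-- **Conditional independence of the two cycle-breaking runs in the coupling of
Lemma 3.3.** Conditionally on the triple of random edge sets `(G_{n,λ}, G^ε_{n,λ}, Ǐ)`,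
the forests `𝔽_{n,λ} = MSF(G_{n,λ}, w)` and `𝔽^ε_{n,λ} = MSF(G^ε_{n,λ}, w̃)` are
independent: under every conditional measure given a possible value of the triple, the
two forests are independent random edge sets. -/
theorem conditional_independence_of_forests
    (n : ℕ) (lam : ℝ) (εr : ℝ) (hε : εr ∈ Set.Ioo (0 : ℝ) 1)
    (hp : pnl n lam ∈ Set.Icc (0 : ℝ) 1)
    (Ω : Type) (mΩ : MeasureSpace Ω) (hprob : IsProbabilityMeasure (ℙ : Measure Ω))
    (w w' w'' b : Sym2 (Fin n) → Ω → ℝ)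
    (hw : ∀ e, Measure.map (w e) ℙ = uniform01)
    (hw' : ∀ e, Measure.map (w' e) ℙ = uniform01)
    (hw'' : ∀ e, Measure.map (w'' e) ℙ = uniform01)
    (hb : ∀ e, Measure.map (b e) ℙ = bernoulliReal εr)
    (hindep : iIndepFun
      (fun i : Sym2 (Fin n) × Fin 4 => ![w i.1, w' i.1, w'' i.1, b i.1] i.2) ℙ)
    (g₁ g₂ gI : Set (Sym2 (Fin n)))
    (hpos : ℙ {ω | (wGraph w (pnl n lam) ω).edgeSet = g₁ ∧
        (wGraph (fun e => noised (w e) (w' e) (b e)) (pnl n lam) ω).edgeSet = g₂ ∧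
        (SimpleGraph.fromEdgeSet {e | w e ω ≤ pnl n lam ∧
          noised (w e) (w' e) (b e) ω ≤ pnl n lam ∧ b e ω = 0}).edgeSet = gI} ≠ 0) :
    @IndepFun Ω (Set (Sym2 (Fin n))) (Set (Sym2 (Fin n))) _ ⊤ ⊤
      (fun ω => MSF (wGraph w (pnl n lam) ω) (fun e => w e ω))
      (fun ω => MSF (wGraph (fun e => noised (w e) (w' e) (b e)) (pnl n lam) ω)
        (fun e =>
          if e ∈ ConnE (wGraph w (pnl n lam) ω) ∩
                ConnE (wGraph (fun e' => noised (w e') (w' e') (b e')) (pnl n lam) ω) ∧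
              w e ω ≤ pnl n lam ∧
              noised (w e) (w' e) (b e) ω ≤ pnl n lam ∧ b e ω = 0
          then pnl n lam * w'' e ω
          else noised (w e) (w' e) (b e) ω))
      (ℙ[|{ω | (wGraph w (pnl n lam) ω).edgeSet = g₁ ∧
        (wGraph (fun e => noised (w e) (w' e) (b e)) (pnl n lam) ω).edgeSet = g₂ ∧
        (SimpleGraph.fromEdgeSet {e | w e ω ≤ pnl n lam ∧
          noised (w e) (w' e) (b e) ω ≤ pnl n lam ∧ b e ω = 0}).edgeSet = gI}]) := by
  classical
  haveI := hprob
  set p : ℝ := pnl n lam with hpdef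
  set A : Set Ω := {ω | (wGraph w p ω).edgeSet = g₁ ∧
      (wGraph (fun e => noised (w e) (w' e) (b e)) p ω).edgeSet = g₂ ∧
      (SimpleGraph.fromEdgeSet {e | w e ω ≤ p ∧
        noised (w e) (w' e) (b e) ω ≤ p ∧ b e ω = 0}).edgeSet = gI} with hAdef
  -- almost everywhere measurable versions
  have hu0 : (uniform01 : Measure ℝ) ≠ 0 := by
    intro hc
    have h1 : (uniform01 : Measure ℝ) Set.univ = 0 := by rw [hc]; simp
    rw [uniform01, Measure.restrict_apply_univ, Real.volume_Icc] at h1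
    norm_num at h1
  have hb0 : bernoulliReal εr ≠ 0 := by
    intro hc
    have h1 : bernoulliReal εr Set.univ = 0 := by rw [hc]; simp
    rw [bernoulliReal] at h1
    simp only [Measure.coe_add, Pi.add_apply, Measure.smul_apply, smul_eq_mul,
      Measure.dirac_apply' _ MeasurableSet.univ, Set.indicator_univ, Pi.one_apply,
      mul_one] at h1
    rw [add_eq_zero] at h1
    have h2 := h1.2
    rw [ENNReal.ofReal_eq_zero] at h2
    linarith [hε.1]
  have haew : ∀ e, AEMeasurable (w e) ℙ := by
    intro e
    by_contra hc
    have := hw e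
    rw [Measure.map_of_not_aemeasurable hc] at this
    exact hu0 this.symm
  have haew' : ∀ e, AEMeasurable (w' e) ℙ := by
    intro e
    by_contra hc
    have := hw' e
    rw [Measure.map_of_not_aemeasurable hc] at this
    exact hu0 this.symm
  have haew'' : ∀ e, AEMeasurable (w'' e) ℙ := by
    intro e
    by_contra hc
    have := hw'' e
    rw [Measure.map_of_not_aemeasurable hc] at this
    exact hu0 this.symm
  have haeb : ∀ e, AEMeasurable (b e) ℙ := by
    intro e
    by_contra hc
    have := hb e
    rw [Measure.map_of_not_aemeasurable hc] at this
    exact hb0 this.symm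
  set wb : Sym2 (Fin n) → Ω → ℝ := fun e => (haew e).mk (w e) with hwbdef
  set wb' : Sym2 (Fin n) → Ω → ℝ := fun e => (haew' e).mk (w' e) with hwb'def
  set wb'' : Sym2 (Fin n) → Ω → ℝ := fun e => (haew'' e).mk (w'' e) with hwb''def
  set bb : Sym2 (Fin n) → Ω → ℝ := fun e => (haeb e).mk (b e) with hbbdef
  have hwbm : ∀ e, Measurable (wb e) := fun e => (haew e).measurable_mk
  have hwb'm : ∀ e, Measurable (wb' e) := fun e => (haew' e).measurable_mk
  have hwb''m : ∀ e, Measurable (wb'' e) := fun e => (haew'' e).measurable_mk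
  have hbbm : ∀ e, Measurable (bb e) := fun e => (haeb e).measurable_mk
  have hgood : ∀ᵐ ω ∂ℙ, ∀ e : Sym2 (Fin n),
      w e ω = wb e ω ∧ w' e ω = wb' e ω ∧ w'' e ω = wb'' e ω ∧ b e ω = bb e ω := by
    rw [ae_all_iff]
    intro e
    filter_upwards [(haew e).ae_eq_mk, (haew' e).ae_eq_mk, (haew'' e).ae_eq_mk,
      (haeb e).ae_eq_mk] with ω h1 h2 h3 h4
    exact ⟨h1, h2, h3, h4⟩
  set nb : Sym2 (Fin n) → Ω → ℝ :=
    fun e ω => if bb e ω = 0 then wb e ω else wb' e ω with hnbdef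
  have hnbm : ∀ e, Measurable (nb e) := by
    intro e
    exact Measurable.ite (measurableSet_eq_fun (hbbm e) measurable_const)
      (hwbm e) (hwb'm e)
  -- graphs
  set Γ₁ : SimpleGraph (Fin n) := SimpleGraph.fromEdgeSet g₁ with hΓ₁def
  set Γ₂ : SimpleGraph (Fin n) := SimpleGraph.fromEdgeSet g₂ with hΓ₂def
  set C₁ : Set (Sym2 (Fin n)) := ConnE Γ₁ with hC₁def
  set C₂ : Set (Sym2 (Fin n)) := ConnE Γ₂ with hC₂def
  have hAne : A.Nonempty := by
    rcases Set.eq_empty_or_nonempty A with h | h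
    · exact absurd (by rw [h]; exact measure_empty) hpos
    · exact h
  obtain ⟨ω₀, hω₀⟩ := hAne
  obtain ⟨hω₀1, hω₀2, hω₀3⟩ := hω₀
  have hmw : ∀ (W : Sym2 (Fin n) → Ω → ℝ) (ω : Ω) (e : Sym2 (Fin n)),
      e ∈ (wGraph W p ω).edgeSet ↔ (W e ω ≤ p ∧ ¬ e.IsDiag) := by
    intro W ω e
    rw [wGraph, mem_fromEdgeSet_iff]
    exact Iff.rfl
  have hg₁ : Γ₁.edgeSet = g₁ := by
    rw [hΓ₁def, ← hω₀1, wGraph, SimpleGraph.fromEdgeSet_edgeSet]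
  have hg₂ : Γ₂.edgeSet = g₂ := by
    rw [hΓ₂def, ← hω₀2, wGraph, SimpleGraph.fromEdgeSet_edgeSet]
  have hgIg : ∀ e ∈ gI, (e ∈ g₁ ∧ e ∈ g₂) ∧ ¬ e.IsDiag := by
    intro e he
    rw [← hω₀3, mem_fromEdgeSet_iff] at he
    obtain ⟨⟨h1, h2, h3⟩, hd⟩ := he
    constructor
    · constructor
      · rw [← hω₀1, hmw]; exact ⟨h1, hd⟩
      · rw [← hω₀2, hmw]; exact ⟨h2, hd⟩
    · exact hd
  have hC₁g : ∀ e ∈ C₁, e ∈ g₁ ∧ ¬ e.IsDiag := by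
    intro e he
    have h1 : e ∈ Γ₁.edgeSet := ConnE_subset Γ₁ he
    exact ⟨hg₁ ▸ h1, SimpleGraph.not_isDiag_of_mem_edgeSet _ h1⟩
  have hC₂g : ∀ e ∈ C₂, e ∈ g₂ ∧ ¬ e.IsDiag := by
    intro e he
    have h1 : e ∈ Γ₂.edgeSet := ConnE_subset Γ₂ he
    exact ⟨hg₂ ▸ h1, SimpleGraph.not_isDiag_of_mem_edgeSet _ h1⟩
  -- the coordinate family
  set Xb : Sym2 (Fin n) × Fin 4 → Ω → ℝ :=
    fun i => ![wb i.1, wb' i.1, wb'' i.1, bb i.1] i.2 with hXbdef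
  have hXb0 : ∀ e, Xb (e, 0) = wb e := fun e => rfl
  have hXb1 : ∀ e, Xb (e, 1) = wb' e := fun e => rfl
  have hXb2 : ∀ e, Xb (e, 2) = wb'' e := fun e => rfl
  have hXb3 : ∀ e, Xb (e, 3) = bb e := fun e => rfl
  have hXbm : ∀ i, Measurable (Xb i) := by
    rintro ⟨e, k⟩
    fin_cases k
    · exact hwbm e
    · exact hwb'm e
    · exact hwb''m e
    · exact hbbm e
  have hindepb : iIndepFun Xb ℙ := by
    apply iIndepFun_congr_ae hindep
    rintro ⟨e, k⟩
    fin_cases k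
    · filter_upwards [(haew e).ae_eq_mk] with ω h; exact h
    · filter_upwards [(haew' e).ae_eq_mk] with ω h; exact h
    · filter_upwards [(haew'' e).ae_eq_mk] with ω h; exact h
    · filter_upwards [(haeb e).ae_eq_mk] with ω h; exact h
  -- the block of coordinates used by the first forest
  set T₁ : Finset (Sym2 (Fin n) × Fin 4) :=
    Finset.univ.filter (fun i => i.2 = 0 ∧ i.1 ∈ C₁) with hT₁def
  have hmemT₁ : ∀ i : Sym2 (Fin n) × Fin 4, i ∈ T₁ ↔ (i.2 = 0 ∧ i.1 ∈ C₁) := by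
    intro i; rw [hT₁def]; simp
  have hmc0 : ∀ e : Sym2 (Fin n), e ∉ C₁ → ((e, (0 : Fin 4)) ∈ T₁ᶜ) := by
    intro e he
    rw [Finset.mem_compl]
    intro hmem
    exact he ((hmemT₁ _).1 hmem).2
  have hmc1 : ∀ e : Sym2 (Fin n), ((e, (1 : Fin 4)) ∈ T₁ᶜ) := by
    intro e
    rw [Finset.mem_compl]
    intro hmem
    have := ((hmemT₁ _).1 hmem).1
    simp at this
  have hmc2 : ∀ e : Sym2 (Fin n), ((e, (2 : Fin 4)) ∈ T₁ᶜ) := by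
    intro e
    rw [Finset.mem_compl]
    intro hmem
    have := ((hmemT₁ _).1 hmem).1
    simp at this
  have hmc3 : ∀ e : Sym2 (Fin n), ((e, (3 : Fin 4)) ∈ T₁ᶜ) := by
    intro e
    rw [Finset.mem_compl]
    intro hmem
    have := ((hmemT₁ _).1 hmem).1
    simp at this
  set tup₁ : Ω → (↥T₁ → ℝ) := fun ω i => Xb i.1 ω with htup₁def
  set tup₂ : Ω → (↥(T₁ᶜ) → ℝ) := fun ω i => Xb i.1 ω with htup₂def
  set lk1 : (↥T₁ → ℝ) → Sym2 (Fin n) × Fin 4 → ℝ :=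
    fun v i => if h : i ∈ T₁ then v ⟨i, h⟩ else 0 with hlk1def
  set lk : (↥(T₁ᶜ) → ℝ) → Sym2 (Fin n) × Fin 4 → ℝ :=
    fun v i => if h : i ∈ T₁ᶜ then v ⟨i, h⟩ else 0 with hlkdef
  have hlk1v : ∀ (ω : Ω) (i : Sym2 (Fin n) × Fin 4) (h : i ∈ T₁),
      lk1 (tup₁ ω) i = Xb i ω := by
    intro ω i h
    rw [hlk1def]
    simp only [dif_pos h]
    rfl
  have hlkv : ∀ (ω : Ω) (i : Sym2 (Fin n) × Fin 4) (h : i ∈ T₁ᶜ),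
      lk (tup₂ ω) i = Xb i ω := by
    intro ω i h
    rw [hlkdef]
    simp only [dif_pos h]
    rfl
  have hlk1m : ∀ i, Measurable (fun v : ↥T₁ → ℝ => lk1 v i) := by
    intro i
    rw [hlk1def]
    by_cases h : i ∈ T₁
    · simp only [dif_pos h]; exact measurable_pi_apply _
    · simp only [dif_neg h]; exact measurable_const
  have hlkm : ∀ i, Measurable (fun v : ↥(T₁ᶜ) → ℝ => lk v i) := by
    intro i
    rw [hlkdef]
    by_cases h : i ∈ T₁ᶜ
    · simp only [dif_pos h]; exact measurable_pi_apply _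
    · simp only [dif_neg h]; exact measurable_const
  -- the two functions of disjoint coordinate blocks
  set φ₁ : (↥T₁ → ℝ) → Set (Sym2 (Fin n)) :=
    fun v => MSF Γ₁ (fun e => if e ∈ C₁ then lk1 v (e, 0) else 2) with hφ₁def
  set φ₂ : (↥(T₁ᶜ) → ℝ) → Set (Sym2 (Fin n)) :=
    fun v => MSF Γ₂ (fun e => if e ∈ C₂ then
      (if e ∈ gI ∧ e ∈ C₁ then p * lk v (e, 2)
        else if e ∈ gI then lk v (e, 0) else lk v (e, 1)) else 2) with hφ₂def
  have hφ₁m : @Measurable (↥T₁ → ℝ) (Set (Sym2 (Fin n))) _ ⊤ φ₁ := by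
    rw [hφ₁def]
    have hinner : Measurable (fun (v : ↥T₁ → ℝ) (e : Sym2 (Fin n)) =>
        if e ∈ C₁ then lk1 v (e, 0) else (2:ℝ)) := by
      apply measurable_pi_lambda
      intro e
      by_cases he : e ∈ C₁
      · simp only [if_pos he]; exact hlk1m _
      · simp only [if_neg he]; exact measurable_const
    exact (measurable_MSF Γ₁).comp hinner
  have hφ₂m : @Measurable (↥(T₁ᶜ) → ℝ) (Set (Sym2 (Fin n))) _ ⊤ φ₂ := by
    rw [hφ₂def]
    have hinner : Measurable (fun (v : ↥(T₁ᶜ) → ℝ) (e : Sym2 (Fin n)) =>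
        if e ∈ C₂ then
          (if e ∈ gI ∧ e ∈ C₁ then p * lk v (e, 2)
            else if e ∈ gI then lk v (e, 0) else lk v (e, 1)) else (2:ℝ)) := by
      apply measurable_pi_lambda
      intro e
      by_cases he : e ∈ C₂
      · simp only [if_pos he]
        by_cases ha : e ∈ gI ∧ e ∈ C₁
        · simp only [if_pos ha]; exact measurable_const.mul (hlkm _)
        · simp only [if_neg ha]
          by_cases hb2 : e ∈ gI
          · simp only [if_pos hb2]; exact hlkm _
          · simp only [if_neg hb2]; exact hlkm _
      · simp only [if_neg he]; exact measurable_const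
    exact (measurable_MSF Γ₂).comp hinner
  set fb₁ : Ω → Set (Sym2 (Fin n)) := fun ω => φ₁ (tup₁ ω) with hfb₁def
  set fb₂ : Ω → Set (Sym2 (Fin n)) := fun ω => φ₂ (tup₂ ω) with hfb₂def
  -- the conditioning event, in terms of the measurable modifications
  set Ab : Set Ω := {ω | (∀ e : Sym2 (Fin n), (wb e ω ≤ p ∧ ¬ e.IsDiag) ↔ e ∈ g₁) ∧
      (∀ e : Sym2 (Fin n), (nb e ω ≤ p ∧ ¬ e.IsDiag) ↔ e ∈ g₂) ∧
      (∀ e : Sym2 (Fin n), ((wb e ω ≤ p ∧ nb e ω ≤ p ∧ bb e ω = 0) ∧ ¬ e.IsDiag) ↔ e ∈ gI)}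
    with hAbdef
  have hAbm : MeasurableSet Ab := by
    rw [hAbdef]
    have hd1 : MeasurableSet {ω : Ω | ∀ e : Sym2 (Fin n),
        (wb e ω ≤ p ∧ ¬ e.IsDiag) ↔ e ∈ g₁} := by
      rw [Set.setOf_forall]
      refine MeasurableSet.iInter fun e => ?_
      apply measurableSet_iff_const
      by_cases hd : e.IsDiag
      · have h : {ω : Ω | wb e ω ≤ p ∧ ¬ e.IsDiag} = ∅ := by ext ω; simp [hd]
        rw [h]; exact MeasurableSet.empty
      · have h : {ω : Ω | wb e ω ≤ p ∧ ¬ e.IsDiag} = {ω | wb e ω ≤ p} := by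
          ext ω; simp [hd]
        rw [h]; exact measurableSet_le (hwbm e) measurable_const
    have hd2 : MeasurableSet {ω : Ω | ∀ e : Sym2 (Fin n),
        (nb e ω ≤ p ∧ ¬ e.IsDiag) ↔ e ∈ g₂} := by
      rw [Set.setOf_forall]
      refine MeasurableSet.iInter fun e => ?_
      apply measurableSet_iff_const
      by_cases hd : e.IsDiag
      · have h : {ω : Ω | nb e ω ≤ p ∧ ¬ e.IsDiag} = ∅ := by ext ω; simp [hd]
        rw [h]; exact MeasurableSet.empty
      · have h : {ω : Ω | nb e ω ≤ p ∧ ¬ e.IsDiag} = {ω | nb e ω ≤ p} := by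
          ext ω; simp [hd]
        rw [h]; exact measurableSet_le (hnbm e) measurable_const
    have hd3 : MeasurableSet {ω : Ω | ∀ e : Sym2 (Fin n),
        ((wb e ω ≤ p ∧ nb e ω ≤ p ∧ bb e ω = 0) ∧ ¬ e.IsDiag) ↔ e ∈ gI} := by
      rw [Set.setOf_forall]
      refine MeasurableSet.iInter fun e => ?_
      apply measurableSet_iff_const
      by_cases hd : e.IsDiag
      · have h : {ω : Ω | (wb e ω ≤ p ∧ nb e ω ≤ p ∧ bb e ω = 0) ∧ ¬ e.IsDiag} = ∅ := by
          ext ω; simp [hd]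
        rw [h]; exact MeasurableSet.empty
      · have h : {ω : Ω | (wb e ω ≤ p ∧ nb e ω ≤ p ∧ bb e ω = 0) ∧ ¬ e.IsDiag} =
            {ω | wb e ω ≤ p ∧ nb e ω ≤ p ∧ bb e ω = 0} := by
          ext ω; simp [hd]
        rw [h]
        exact (measurableSet_le (hwbm e) measurable_const).inter
          ((measurableSet_le (hnbm e) measurable_const).inter
            (measurableSet_eq_fun (hbbm e) measurable_const))
    exact hd1.inter (hd2.inter hd3)
  -- A and Ab agree almost everywhere
  have hAeq : A =ᵐ[ℙ] Ab := by
    rw [Filter.eventuallyEq_set]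
    filter_upwards [hgood] with ω hgd
    have hnval : ∀ e : Sym2 (Fin n), noised (w e) (w' e) (b e) ω = nb e ω := by
      intro e
      show (if b e ω = 0 then w e ω else w' e ω) = nb e ω
      rw [(hgd e).2.2.2, (hgd e).1, (hgd e).2.1, hnbdef]
    have c1 : ((wGraph w p ω).edgeSet = g₁) ↔
        ∀ e : Sym2 (Fin n), (wb e ω ≤ p ∧ ¬ e.IsDiag) ↔ e ∈ g₁ := by
      rw [Set.ext_iff]
      apply forall_congr'
      intro e
      rw [hmw w ω e, (hgd e).1]
    have c2 : ((wGraph (fun e => noised (w e) (w' e) (b e)) p ω).edgeSet = g₂) ↔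
        ∀ e : Sym2 (Fin n), (nb e ω ≤ p ∧ ¬ e.IsDiag) ↔ e ∈ g₂ := by
      rw [Set.ext_iff]
      apply forall_congr'
      intro e
      rw [hmw (fun e => noised (w e) (w' e) (b e)) ω e, hnval e]
    have c3 : ((SimpleGraph.fromEdgeSet {e | w e ω ≤ p ∧
          noised (w e) (w' e) (b e) ω ≤ p ∧ b e ω = 0}).edgeSet = gI) ↔
        ∀ e : Sym2 (Fin n),
          ((wb e ω ≤ p ∧ nb e ω ≤ p ∧ bb e ω = 0) ∧ ¬ e.IsDiag) ↔ e ∈ gI := by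
      rw [Set.ext_iff]
      apply forall_congr'
      intro e
      rw [mem_fromEdgeSet_iff]
      have hset : (e ∈ {e : Sym2 (Fin n) | w e ω ≤ p ∧
          noised (w e) (w' e) (b e) ω ≤ p ∧ b e ω = 0}) =
          (wb e ω ≤ p ∧ nb e ω ≤ p ∧ bb e ω = 0) := by
        show (w e ω ≤ p ∧ noised (w e) (w' e) (b e) ω ≤ p ∧ b e ω = 0) = _
        rw [(hgd e).1, hnval e, (hgd e).2.2.2]
      rw [hset]
    rw [hAdef, hAbdef]
    show ((wGraph w p ω).edgeSet = g₁ ∧ _ ∧ _) ↔ _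
    rw [c1, c2, c3]
    exact Iff.rfl
  have hPAb : ℙ Ab ≠ 0 := by
    rw [← measure_congr hAeq]
    exact hpos
  have hcond : ℙ[|A] = ℙ[|Ab] := by
    rw [ProbabilityTheory.cond, ProbabilityTheory.cond, measure_congr hAeq,
      Measure.restrict_congr_set hAeq]
  -- pointwise identification of the forests on the event
  have hGeq : ∀ ω, ω ∈ Ab →
      (∀ e : Sym2 (Fin n), w e ω = wb e ω ∧ w' e ω = wb' e ω ∧ w'' e ω = wb'' e ω ∧
        b e ω = bb e ω) →
      wGraph w p ω = Γ₁ ∧ wGraph (fun e => noised (w e) (w' e) (b e)) p ω = Γ₂ := by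
    intro ω hAb hgd
    rw [hAbdef] at hAb
    obtain ⟨h1, h2, h3⟩ := hAb
    have hnval : ∀ e : Sym2 (Fin n), noised (w e) (w' e) (b e) ω = nb e ω := by
      intro e
      show (if b e ω = 0 then w e ω else w' e ω) = nb e ω
      rw [(hgd e).2.2.2, (hgd e).1, (hgd e).2.1, hnbdef]
    constructor
    · rw [← SimpleGraph.edgeSet_inj, hg₁]
      ext e
      rw [hmw w ω e, (hgd e).1]
      exact h1 e
    · rw [← SimpleGraph.edgeSet_inj, hg₂]
      ext e
      rw [hmw (fun e => noised (w e) (w' e) (b e)) ω e, hnval e]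
      exact h2 e
  have hpt₁ : ∀ ω, ω ∈ Ab →
      (∀ e : Sym2 (Fin n), w e ω = wb e ω ∧ w' e ω = wb' e ω ∧ w'' e ω = wb'' e ω ∧
        b e ω = bb e ω) →
      fb₁ ω = MSF (wGraph w p ω) (fun e => w e ω) := by
    intro ω hAb hgd
    have hG1 := (hGeq ω hAb hgd).1
    rw [hG1]
    have hfb : fb₁ ω = MSF Γ₁ (fun e => if e ∈ C₁ then wb e ω else 2) := by
      rw [hfb₁def, hφ₁def]
      show MSF Γ₁ _ = MSF Γ₁ _
      have harg : (fun e => if e ∈ C₁ then lk1 (tup₁ ω) (e, 0) else (2:ℝ)) =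
          (fun e => if e ∈ C₁ then wb e ω else (2:ℝ)) := by
        funext e
        by_cases he : e ∈ C₁
        · rw [if_pos he, if_pos he, hlk1v ω (e, 0) ((hmemT₁ _).2 ⟨rfl, he⟩), hXb0]
        · rw [if_neg he, if_neg he]
      rw [harg]
    rw [hfb]
    apply MSF_congr
    intro e he
    have heC : e ∈ C₁ := by rw [hC₁def]; exact he
    rw [if_pos heC, ← (hgd e).1]
  have hpt₂ : ∀ ω, ω ∈ Ab →
      (∀ e : Sym2 (Fin n), w e ω = wb e ω ∧ w' e ω = wb' e ω ∧ w'' e ω = wb'' e ω ∧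
        b e ω = bb e ω) →
      fb₂ ω = MSF (wGraph (fun e => noised (w e) (w' e) (b e)) p ω)
        (fun e =>
          if e ∈ ConnE (wGraph w p ω) ∩
                ConnE (wGraph (fun e' => noised (w e') (w' e') (b e')) p ω) ∧
              w e ω ≤ p ∧
              noised (w e) (w' e) (b e) ω ≤ p ∧ b e ω = 0
          then p * w'' e ω
          else noised (w e) (w' e) (b e) ω) := by
    intro ω hAb hgd
    obtain ⟨hG1, hG2⟩ := hGeq ω hAb hgd
    rw [hAbdef] at hAb
    obtain ⟨h1, h2, h3⟩ := hAb
    have hnval : ∀ e : Sym2 (Fin n), noised (w e) (w' e) (b e) ω = nb e ω := by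
      intro e
      show (if b e ω = 0 then w e ω else w' e ω) = nb e ω
      rw [(hgd e).2.2.2, (hgd e).1, (hgd e).2.1, hnbdef]
    rw [hG1, hG2]
    have hfb : fb₂ ω = MSF Γ₂ (fun e => if e ∈ C₂ then
        (if e ∈ gI ∧ e ∈ C₁ then p * wb'' e ω
          else if e ∈ gI then wb e ω else wb' e ω) else 2) := by
      rw [hfb₂def, hφ₂def]
      show MSF Γ₂ _ = MSF Γ₂ _
      have harg : (fun e => if e ∈ C₂ then
          (if e ∈ gI ∧ e ∈ C₁ then p * lk (tup₂ ω) (e, 2)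
            else if e ∈ gI then lk (tup₂ ω) (e, 0) else lk (tup₂ ω) (e, 1)) else (2:ℝ)) =
          (fun e => if e ∈ C₂ then
          (if e ∈ gI ∧ e ∈ C₁ then p * wb'' e ω
            else if e ∈ gI then wb e ω else wb' e ω) else (2:ℝ)) := by
        funext e
        by_cases hc2 : e ∈ C₂
        · rw [if_pos hc2, if_pos hc2]
          by_cases ha : e ∈ gI ∧ e ∈ C₁
          · rw [if_pos ha, if_pos ha, hlkv ω (e, 2) (hmc2 e), hXb2]
          · rw [if_neg ha, if_neg ha]
            by_cases hb2 : e ∈ gI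
            · have hnc1 : e ∉ C₁ := fun hc1 => ha ⟨hb2, hc1⟩
              rw [if_pos hb2, if_pos hb2, hlkv ω (e, 0) (hmc0 e hnc1), hXb0]
            · rw [if_neg hb2, if_neg hb2, hlkv ω (e, 1) (hmc1 e), hXb1]
        · rw [if_neg hc2, if_neg hc2]
      rw [harg]
    rw [hfb]
    apply MSF_congr
    intro e he
    have heC : e ∈ C₂ := by rw [hC₂def]; exact he
    rw [if_pos heC]
    have heg2 : e ∈ g₂ := (hC₂g e heC).1
    have hed : ¬ e.IsDiag := (hC₂g e heC).2
    by_cases hgIe : e ∈ gI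
    · obtain ⟨⟨hW, hN, hB⟩, -⟩ := (h3 e).mpr hgIe
      by_cases hc1 : e ∈ C₁
      · rw [if_pos ⟨hgIe, hc1⟩]
        have hcondT : e ∈ ConnE Γ₁ ∩ ConnE Γ₂ ∧ w e ω ≤ p ∧
            noised (w e) (w' e) (b e) ω ≤ p ∧ b e ω = 0 := by
          refine ⟨⟨?_, he⟩, ?_, ?_, ?_⟩
          · rw [hC₁def] at hc1; exact hc1
          · rw [(hgd e).1]; exact hW
          · rw [hnval e]; exact hN
          · rw [(hgd e).2.2.2]; exact hB
        rw [if_pos hcondT, (hgd e).2.2.1]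
      · have hcondF : ¬(e ∈ ConnE Γ₁ ∩ ConnE Γ₂ ∧ w e ω ≤ p ∧
            noised (w e) (w' e) (b e) ω ≤ p ∧ b e ω = 0) := by
          rintro ⟨⟨hC1', -⟩, -⟩
          exact hc1 (by rw [hC₁def]; exact hC1')
        rw [if_neg (fun hh : e ∈ gI ∧ e ∈ C₁ => hc1 hh.2), if_pos hgIe,
          if_neg hcondF, hnval e, hnbdef]
        exact (if_pos hB).symm
    · have hcondF : ¬(e ∈ ConnE Γ₁ ∩ ConnE Γ₂ ∧ w e ω ≤ p ∧
          noised (w e) (w' e) (b e) ω ≤ p ∧ b e ω = 0) := by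
        rintro ⟨-, hw1, hn1, hb1⟩
        apply hgIe
        refine (h3 e).mp ⟨⟨?_, ?_, ?_⟩, hed⟩
        · rw [← (hgd e).1]; exact hw1
        · rw [← hnval e]; exact hn1
        · rw [← (hgd e).2.2.2]; exact hb1
      have hBne : bb e ω ≠ 0 := by
        intro hB0
        apply hgIe
        have hN : nb e ω ≤ p := ((h2 e).mpr heg2).1
        have hWeq : nb e ω = wb e ω := by rw [hnbdef]; exact if_pos hB0
        refine (h3 e).mp ⟨⟨?_, hN, hB0⟩, hed⟩
        rw [← hWeq]; exact hN
      rw [if_neg (fun hh : e ∈ gI ∧ e ∈ C₁ => hgIe hh.1), if_neg hgIe,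
        if_neg hcondF, hnval e, hnbdef]
      exact (if_neg hBne).symm
  -- the rectangle description of the event
  set M₁ : Set (↥T₁ → ℝ) := {v | ∀ i, v i ≤ p} with hM₁def
  have hM₁m : MeasurableSet M₁ := by
    rw [hM₁def, Set.setOf_forall]
    exact MeasurableSet.iInter fun i =>
      measurableSet_le (measurable_pi_apply i) measurable_const
  set MR : Set (↥(T₁ᶜ) → ℝ) := {v |
      (∀ e : Sym2 (Fin n),
        ((if e ∈ C₁ then (0:ℝ) else lk v (e, 0)) ≤ p ∧ ¬ e.IsDiag) ↔ e ∈ g₁) ∧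
      (∀ e : Sym2 (Fin n),
        ((if lk v (e, 3) = 0 then (if e ∈ C₁ then (0:ℝ) else lk v (e, 0))
          else lk v (e, 1)) ≤ p ∧ ¬ e.IsDiag) ↔ e ∈ g₂) ∧
      (∀ e : Sym2 (Fin n),
        (((if e ∈ C₁ then (0:ℝ) else lk v (e, 0)) ≤ p ∧
          (if lk v (e, 3) = 0 then (if e ∈ C₁ then (0:ℝ) else lk v (e, 0))
            else lk v (e, 1)) ≤ p ∧ lk v (e, 3) = 0) ∧ ¬ e.IsDiag) ↔ e ∈ gI)} with hMRdef
  have hr1m : ∀ e : Sym2 (Fin n),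
      Measurable (fun v : ↥(T₁ᶜ) → ℝ => if e ∈ C₁ then (0:ℝ) else lk v (e, 0)) := by
    intro e
    by_cases hc : e ∈ C₁
    · simp only [if_pos hc]; exact measurable_const
    · simp only [if_neg hc]; exact hlkm _
  have hr2m : ∀ e : Sym2 (Fin n),
      Measurable (fun v : ↥(T₁ᶜ) → ℝ =>
        if lk v (e, 3) = 0 then (if e ∈ C₁ then (0:ℝ) else lk v (e, 0))
        else lk v (e, 1)) := by
    intro e
    exact Measurable.ite (measurableSet_eq_fun (hlkm _) measurable_const)
      (hr1m e) (hlkm _)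
  have hMRm : MeasurableSet MR := by
    rw [hMRdef]
    have hd1 : MeasurableSet {v : ↥(T₁ᶜ) → ℝ | ∀ e : Sym2 (Fin n),
        ((if e ∈ C₁ then (0:ℝ) else lk v (e, 0)) ≤ p ∧ ¬ e.IsDiag) ↔ e ∈ g₁} := by
      rw [Set.setOf_forall]
      refine MeasurableSet.iInter fun e => ?_
      apply measurableSet_iff_const
      by_cases hd : e.IsDiag
      · have h : {v : ↥(T₁ᶜ) → ℝ |
            (if e ∈ C₁ then (0:ℝ) else lk v (e, 0)) ≤ p ∧ ¬ e.IsDiag} = ∅ := by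
          ext v; simp [hd]
        rw [h]; exact MeasurableSet.empty
      · have h : {v : ↥(T₁ᶜ) → ℝ |
            (if e ∈ C₁ then (0:ℝ) else lk v (e, 0)) ≤ p ∧ ¬ e.IsDiag} =
            {v | (if e ∈ C₁ then (0:ℝ) else lk v (e, 0)) ≤ p} := by
          ext v; simp [hd]
        rw [h]; exact measurableSet_le (hr1m e) measurable_const
    have hd2 : MeasurableSet {v : ↥(T₁ᶜ) → ℝ | ∀ e : Sym2 (Fin n),
        ((if lk v (e, 3) = 0 then (if e ∈ C₁ then (0:ℝ) else lk v (e, 0))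
          else lk v (e, 1)) ≤ p ∧ ¬ e.IsDiag) ↔ e ∈ g₂} := by
      rw [Set.setOf_forall]
      refine MeasurableSet.iInter fun e => ?_
      apply measurableSet_iff_const
      by_cases hd : e.IsDiag
      · have h : {v : ↥(T₁ᶜ) → ℝ |
            (if lk v (e, 3) = 0 then (if e ∈ C₁ then (0:ℝ) else lk v (e, 0))
              else lk v (e, 1)) ≤ p ∧ ¬ e.IsDiag} = ∅ := by
          ext v; simp [hd]
        rw [h]; exact MeasurableSet.empty
      · have h : {v : ↥(T₁ᶜ) → ℝ |
            (if lk v (e, 3) = 0 then (if e ∈ C₁ then (0:ℝ) else lk v (e, 0))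
              else lk v (e, 1)) ≤ p ∧ ¬ e.IsDiag} =
            {v | (if lk v (e, 3) = 0 then (if e ∈ C₁ then (0:ℝ) else lk v (e, 0))
              else lk v (e, 1)) ≤ p} := by
          ext v; simp [hd]
        rw [h]; exact measurableSet_le (hr2m e) measurable_const
    have hd3 : MeasurableSet {v : ↥(T₁ᶜ) → ℝ | ∀ e : Sym2 (Fin n),
        (((if e ∈ C₁ then (0:ℝ) else lk v (e, 0)) ≤ p ∧
          (if lk v (e, 3) = 0 then (if e ∈ C₁ then (0:ℝ) else lk v (e, 0))
            else lk v (e, 1)) ≤ p ∧ lk v (e, 3) = 0) ∧ ¬ e.IsDiag) ↔ e ∈ gI} := by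
      rw [Set.setOf_forall]
      refine MeasurableSet.iInter fun e => ?_
      apply measurableSet_iff_const
      by_cases hd : e.IsDiag
      · have h : {v : ↥(T₁ᶜ) → ℝ |
            ((if e ∈ C₁ then (0:ℝ) else lk v (e, 0)) ≤ p ∧
              (if lk v (e, 3) = 0 then (if e ∈ C₁ then (0:ℝ) else lk v (e, 0))
                else lk v (e, 1)) ≤ p ∧ lk v (e, 3) = 0) ∧ ¬ e.IsDiag} = ∅ := by
          ext v; simp [hd]
        rw [h]; exact MeasurableSet.empty
      · have h : {v : ↥(T₁ᶜ) → ℝ |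
            ((if e ∈ C₁ then (0:ℝ) else lk v (e, 0)) ≤ p ∧
              (if lk v (e, 3) = 0 then (if e ∈ C₁ then (0:ℝ) else lk v (e, 0))
                else lk v (e, 1)) ≤ p ∧ lk v (e, 3) = 0) ∧ ¬ e.IsDiag} =
            {v | (if e ∈ C₁ then (0:ℝ) else lk v (e, 0)) ≤ p ∧
              (if lk v (e, 3) = 0 then (if e ∈ C₁ then (0:ℝ) else lk v (e, 0))
                else lk v (e, 1)) ≤ p ∧ lk v (e, 3) = 0} := by
          ext v; simp [hd]
        rw [h]
        exact (measurableSet_le (hr1m e) measurable_const).inter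
          ((measurableSet_le (hr2m e) measurable_const).inter
            (measurableSet_eq_fun (hlkm _) measurable_const))
    exact hd1.inter (hd2.inter hd3)
  -- value identifications for the second block
  have hYval : ∀ (ω : Ω) (e : Sym2 (Fin n)),
      (if e ∈ C₁ then (0:ℝ) else lk (tup₂ ω) (e, 0)) =
      (if e ∈ C₁ then (0:ℝ) else wb e ω) := by
    intro ω e
    by_cases hc : e ∈ C₁
    · rw [if_pos hc, if_pos hc]
    · rw [if_neg hc, if_neg hc, hlkv ω (e, 0) (hmc0 e hc), hXb0]
  have h1val : ∀ (ω : Ω) (e : Sym2 (Fin n)), lk (tup₂ ω) (e, 1) = wb' e ω := by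
    intro ω e; rw [hlkv ω (e, 1) (hmc1 e), hXb1]
  have h3val : ∀ (ω : Ω) (e : Sym2 (Fin n)), lk (tup₂ ω) (e, 3) = bb e ω := by
    intro ω e; rw [hlkv ω (e, 3) (hmc3 e), hXb3]
  have hA1mem : ∀ ω : Ω, ω ∈ tup₁ ⁻¹' M₁ ↔ ∀ e ∈ C₁, wb e ω ≤ p := by
    intro ω
    rw [Set.mem_preimage, hM₁def, Set.mem_setOf_eq]
    constructor
    · intro h e he
      have hm : ((e, (0:Fin 4)) ∈ T₁) := (hmemT₁ _).2 ⟨rfl, he⟩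
      have := h ⟨(e, 0), hm⟩
      rw [htup₁def] at this
      exact this
    · intro h i
      obtain ⟨⟨e, k⟩, hik⟩ := i
      obtain ⟨hk, he⟩ := (hmemT₁ _).1 hik
      have hk' : k = 0 := hk
      subst hk'
      rw [htup₁def]
      exact h e he
  -- the event factorises over the two blocks
  have hE1 : Ab = tup₁ ⁻¹' M₁ ∩ tup₂ ⁻¹' MR := by
    ext ω
    have hL : ω ∈ Ab ↔ ∀ e : Sym2 (Fin n),
        (((wb e ω ≤ p ∧ ¬ e.IsDiag) ↔ e ∈ g₁) ∧
         (((if bb e ω = 0 then wb e ω else wb' e ω) ≤ p ∧ ¬ e.IsDiag) ↔ e ∈ g₂) ∧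
         (((wb e ω ≤ p ∧ (if bb e ω = 0 then wb e ω else wb' e ω) ≤ p ∧ bb e ω = 0) ∧
            ¬ e.IsDiag) ↔ e ∈ gI)) := by
      rw [hAbdef, Set.mem_setOf_eq, hnbdef]
      exact ⟨fun ⟨a, b1, c⟩ e => ⟨a e, b1 e, c e⟩,
        fun h => ⟨fun e => (h e).1, fun e => (h e).2.1, fun e => (h e).2.2⟩⟩
    have hR : (ω ∈ tup₁ ⁻¹' M₁ ∩ tup₂ ⁻¹' MR) ↔ ∀ e : Sym2 (Fin n),
        ((e ∈ C₁ → wb e ω ≤ p) ∧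
         (((if e ∈ C₁ then (0:ℝ) else wb e ω) ≤ p ∧ ¬ e.IsDiag) ↔ e ∈ g₁) ∧
         (((if bb e ω = 0 then (if e ∈ C₁ then (0:ℝ) else wb e ω) else wb' e ω) ≤ p ∧
            ¬ e.IsDiag) ↔ e ∈ g₂) ∧
         ((((if e ∈ C₁ then (0:ℝ) else wb e ω) ≤ p ∧
            (if bb e ω = 0 then (if e ∈ C₁ then (0:ℝ) else wb e ω) else wb' e ω) ≤ p ∧
            bb e ω = 0) ∧ ¬ e.IsDiag) ↔ e ∈ gI)) := by
      rw [Set.mem_inter_iff, hA1mem]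
      have hMRmem : ω ∈ tup₂ ⁻¹' MR ↔
          ((∀ e : Sym2 (Fin n),
            (((if e ∈ C₁ then (0:ℝ) else wb e ω) ≤ p ∧ ¬ e.IsDiag) ↔ e ∈ g₁)) ∧
           (∀ e : Sym2 (Fin n),
            (((if bb e ω = 0 then (if e ∈ C₁ then (0:ℝ) else wb e ω) else wb' e ω) ≤ p ∧
              ¬ e.IsDiag) ↔ e ∈ g₂)) ∧
           (∀ e : Sym2 (Fin n),
            ((((if e ∈ C₁ then (0:ℝ) else wb e ω) ≤ p ∧
              (if bb e ω = 0 then (if e ∈ C₁ then (0:ℝ) else wb e ω) else wb' e ω) ≤ p ∧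
              bb e ω = 0) ∧ ¬ e.IsDiag) ↔ e ∈ gI))) := by
        rw [Set.mem_preimage, hMRdef, Set.mem_setOf_eq]
        simp only [hYval, h1val, h3val]
      rw [hMRmem]
      constructor
      · rintro ⟨hA1, hm1, hm2, hm3⟩
        exact fun e => ⟨fun he => hA1 e he, hm1 e, hm2 e, hm3 e⟩
      · intro h
        exact ⟨fun e he => (h e).1 he, fun e => (h e).2.1, fun e => (h e).2.2.1,
          fun e => (h e).2.2.2⟩
    rw [hL, hR]
    apply forall_congr'
    intro e
    exact edge_iff hp.1 (fun hc => ⟨(hC₁g e hc).1, (hC₁g e hc).2⟩)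
  -- the two-block independence
  have hIF : IndepFun tup₁ tup₂ ℙ := by
    rw [htup₁def, htup₂def]
    exact hindepb.indepFun_finset T₁ T₁ᶜ disjoint_compl_right hXbm
  have hfact := indepFun_iff_measure_inter_preimage_eq_mul.mp hIF
  -- conditional independence of the block functions
  have hmain : @IndepFun Ω (Set (Sym2 (Fin n))) (Set (Sym2 (Fin n))) _ ⊤ ⊤ fb₁ fb₂ (ℙ[|Ab]) := by
    rw [indepFun_iff_measure_inter_preimage_eq_mul]
    intro S T _ _
    have hMS : MeasurableSet (φ₁ ⁻¹' S) := hφ₁m MeasurableSpace.measurableSet_top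
    have hMT : MeasurableSet (φ₂ ⁻¹' T) := hφ₂m MeasurableSpace.measurableSet_top
    have hpre1 : fb₁ ⁻¹' S = tup₁ ⁻¹' (φ₁ ⁻¹' S) := by
      rw [hfb₁def]; rfl
    have hpre2 : fb₂ ⁻¹' T = tup₂ ⁻¹' (φ₂ ⁻¹' T) := by
      rw [hfb₂def]; rfl
    rw [cond_apply hAbm, cond_apply hAbm, cond_apply hAbm]
    have e1 : Ab ∩ (fb₁ ⁻¹' S ∩ fb₂ ⁻¹' T) =
        tup₁ ⁻¹' (M₁ ∩ φ₁ ⁻¹' S) ∩ tup₂ ⁻¹' (MR ∩ φ₂ ⁻¹' T) := by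
      rw [hE1, hpre1, hpre2, Set.preimage_inter, Set.preimage_inter]
      ext ω
      simp only [Set.mem_inter_iff, Set.mem_preimage]
      tauto
    have e2 : Ab ∩ fb₁ ⁻¹' S = tup₁ ⁻¹' (M₁ ∩ φ₁ ⁻¹' S) ∩ tup₂ ⁻¹' MR := by
      rw [hE1, hpre1, Set.preimage_inter]
      ext ω
      simp only [Set.mem_inter_iff, Set.mem_preimage]
      tauto
    have e3 : Ab ∩ fb₂ ⁻¹' T = tup₁ ⁻¹' M₁ ∩ tup₂ ⁻¹' (MR ∩ φ₂ ⁻¹' T) := by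
      rw [hE1, hpre2, Set.preimage_inter]
      ext ω
      simp only [Set.mem_inter_iff, Set.mem_preimage]
      tauto
    have e0 : ℙ Ab = ℙ (tup₁ ⁻¹' M₁) * ℙ (tup₂ ⁻¹' MR) := by
      rw [hE1]
      exact hfact _ _ hM₁m hMRm
    rw [e1, e2, e3, e0,
      hfact _ _ (hM₁m.inter hMS) (hMRm.inter hMT),
      hfact _ _ (hM₁m.inter hMS) hMRm,
      hfact _ _ hM₁m (hMRm.inter hMT)]
    set α := ℙ (tup₁ ⁻¹' (M₁ ∩ φ₁ ⁻¹' S)) with hαdef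
    set β := ℙ (tup₂ ⁻¹' (MR ∩ φ₂ ⁻¹' T)) with hβdef
    set α₀ := ℙ (tup₁ ⁻¹' M₁) with hα₀def
    set ρ := ℙ (tup₂ ⁻¹' MR) with hρdef
    have hZ : α₀ * ρ ≠ 0 := by
      rw [hα₀def, hρdef, ← hfact _ _ hM₁m hMRm, ← hE1]
      exact hPAb
    have hZtop : α₀ * ρ ≠ ⊤ := by
      rw [hα₀def, hρdef, ← hfact _ _ hM₁m hMRm, ← hE1]
      exact measure_ne_top _ _
    have hinv : (α₀ * ρ)⁻¹ * (α₀ * ρ) = 1 := ENNReal.inv_mul_cancel hZ hZtop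
    calc (α₀ * ρ)⁻¹ * (α * β)
        = ((α₀ * ρ)⁻¹ * (α * β)) * 1 := by rw [mul_one]
      _ = ((α₀ * ρ)⁻¹ * (α * β)) * ((α₀ * ρ)⁻¹ * (α₀ * ρ)) := by rw [hinv]
      _ = ((α₀ * ρ)⁻¹ * (α * ρ)) * ((α₀ * ρ)⁻¹ * (α₀ * β)) := by ring
  -- transfer back along the almost-everywhere identifications
  have hcond_ac : ∀ s : Set Ω, ℙ s = 0 → (ℙ[|Ab]) s = 0 := by
    intro s hs
    rw [ProbabilityTheory.cond, Measure.smul_apply, smul_eq_mul]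
    have hres : Measure.restrict ℙ Ab s ≤ ℙ s := Measure.restrict_apply_le _ _
    rw [hs] at hres
    rw [le_zero_iff.mp hres, mul_zero]
  have hcondAbc : (ℙ[|Ab]) Abᶜ = 0 := by
    rw [cond_apply hAbm, Set.inter_compl_self, measure_empty, mul_zero]
  have hbad0 : ℙ {ω : Ω | ¬ ∀ e : Sym2 (Fin n),
      w e ω = wb e ω ∧ w' e ω = wb' e ω ∧ w'' e ω = wb'' e ω ∧ b e ω = bb e ω} = 0 :=
    ae_iff.mp hgood
  rw [hcond]
  refine IndepFun.congr hmain ?_ ?_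
  · rw [Filter.EventuallyEq, ae_iff]
    refine measure_mono_null ?_ (measure_union_null hcondAbc (hcond_ac _ hbad0))
    intro ω hω
    by_contra hcontra
    rw [Set.mem_union] at hcontra
    have hA1 : ω ∈ Ab := by
      by_contra h1
      exact hcontra (Or.inl h1)
    have hgd : ∀ e : Sym2 (Fin n), w e ω = wb e ω ∧ w' e ω = wb' e ω ∧
        w'' e ω = wb'' e ω ∧ b e ω = bb e ω := by
      by_contra h2
      exact hcontra (Or.inr h2)
    exact hω (hpt₁ ω hA1 hgd)
  · rw [Filter.EventuallyEq, ae_iff]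
    refine measure_mono_null ?_ (measure_union_null hcondAbc (hcond_ac _ hbad0))
    intro ω hω
    by_contra hcontra
    rw [Set.mem_union] at hcontra
    have hA1 : ω ∈ Ab := by
      by_contra h1
      exact hcontra (Or.inl h1)
    have hgd : ∀ e : Sym2 (Fin n), w e ω = wb e ω ∧ w' e ω = wb' e ω ∧
        w'' e ω = wb'' e ω ∧ b e ω = bb e ω := by
      by_contra h2
      exact hcontra (Or.inr h2)
    exact hω (hpt₂ ω hA1 hgd)







end MSTNoise
end
end
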